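/- arXiv:math/0506155 — 11 statements merged into one kernel-verified Lean document; each statement's English description precedes it below -/
import Mathlib

section
/- If the set P = {p_1 < p_2 < ... < p_{2n}} can be partitioned into n pairs whose differences are a_1 ≥ a_2 ≥ ... ≥ a_n, then for every m with 1 ≤ m ≤ n, the partial sum a_1 + ... + a_m is at most (p_{2n+1-m} + ... + p_{2n}) - (p_1 + ... + p_m), i.e. the sum of the m largest elements of P minus the sum of the m smallest elements of P. -/
lemma fin_sm_add {m : ℕ} {g : Fin m → ℕ} (hg : StrictMono g) :
    ∀ d (k : ℕ) (h : k + d < m), g ⟨k, by omega⟩ + d ≤ g ⟨k + d, h⟩ := by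
  intro d
  induction d with
  | zero => intro k h; simp
  | succ d ih =>
      intro k h
      have h1 : k + d < m := by omega
      have := ih k h1
      have h2 : g ⟨k + d, h1⟩ < g ⟨k + d + 1, by omega⟩ := by
        apply hg; simp [Fin.lt_def]
      have h3 : (⟨k + (d+1), h⟩ : Fin m) = ⟨k + d + 1, by omega⟩ := by
        simp [Nat.add_assoc]
      rw [h3]; omega

lemma fin_sm_le {m : ℕ} {g : Fin m → ℕ} (hg : StrictMono g) (k : Fin m) : (k:ℕ) ≤ g k := by
  have := fin_sm_add hg k 0 (by omega)
  simp at this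
  calc (k:ℕ) ≤ g ⟨0, by omega⟩ + k := by omega
    _ ≤ _ := by simpa using fin_sm_add hg k 0 (by omega)

lemma fin_sm_ub {m N : ℕ} {g : Fin m → ℕ} (hg : StrictMono g)
    (hN : ∀ k, g k < N) (k : Fin m) : g k ≤ N - m + k := by
  have hk : (k:ℕ) + (m - 1 - k) < m := by omega
  have := fin_sm_add hg (m - 1 - k) k hk
  have h2 := hN ⟨k + (m - 1 - k), hk⟩
  have hkk : (⟨(k:ℕ), by omega⟩ : Fin m) = k := rfl
  rw [hkk] at this
  omega

lemma sum_bounds (N : ℕ) (p : ℕ → ℕ) (hmono : ∀ i j, i ≤ j → j < N → p i ≤ p j)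
    (I : Finset ℕ) (hI : I ⊆ Finset.range N) :
    (∑ i ∈ Finset.range I.card, p i ≤ ∑ i ∈ I, p i) ∧
      (∑ i ∈ I, p i ≤ ∑ i ∈ Finset.Ico (N - I.card) N, p i) := by
  set m := I.card with hm
  have hmN : m ≤ N := by
    have := Finset.card_le_card hI
    simpa using this
  have f := I.orderEmbOfFin hm.symm
  have hsm : StrictMono (I.orderEmbOfFin hm.symm) := (I.orderEmbOfFin hm.symm).strictMono
  have hfN : ∀ k, (I.orderEmbOfFin hm.symm) k < N := by
    intro k
    have := Finset.orderEmbOfFin_mem I hm.symm k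
    exact Finset.mem_range.mp (hI this)
  have hsum : ∑ i ∈ I, p i = ∑ k : Fin m, p ((I.orderEmbOfFin hm.symm) k) := by
    rw [← Finset.sum_image (f := p) (g := (I.orderEmbOfFin hm.symm)) ?_]
    · congr 1
      ext x
      simp only [Finset.mem_image, Finset.mem_univ, true_and]
      constructor
      · intro hx
        have : x ∈ Set.range (I.orderEmbOfFin hm.symm) := by
          rw [Finset.range_orderEmbOfFin]; exact hx
        obtain ⟨k, hk⟩ := this
        exact ⟨k, hk⟩
      · rintro ⟨k, _, rfl⟩; exact Finset.orderEmbOfFin_mem I hm.symm k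
    · intro i _ j _ h; exact hsm.injective h
  constructor
  · rw [hsum, ← Fin.sum_univ_eq_sum_range]
    apply Finset.sum_le_sum
    intro k _
    exact hmono k _ (fin_sm_le hsm k) (hfN k)
  · rw [hsum, Finset.sum_Ico_eq_sum_range]
    have hNm : N - (N - m) = m := by omega
    rw [hNm, ← Fin.sum_univ_eq_sum_range (f := fun i => p (N - m + i))]
    apply Finset.sum_le_sum
    intro k _
    have h1 : (I.orderEmbOfFin hm.symm) k ≤ N - m + k := fin_sm_ub hsm hfN k
    have h2 : N - m + (k:ℕ) < N := by have := k.2; omega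
    exact hmono _ _ h1 h2

lemma msum_bounds (N : ℕ) (p : ℕ → ℕ) (hp : ∀ i j, i < j → j < N → p i < p j)
    (Q : Multiset ℕ) (hQ : Q ≤ (Finset.range N).val.map p) :
    (∑ i ∈ Finset.range Q.card, p i ≤ Q.sum) ∧
      (Q.sum ≤ ∑ i ∈ Finset.Ico (N - Q.card) N, p i) := by
  have hmono : ∀ i j, i ≤ j → j < N → p i ≤ p j := by
    intro i j hij hj
    rcases Nat.lt_or_ge i j with h | h
    · exact (hp i j h hj).le
    · have : i = j := by omega
      subst this; exact le_refl _
  have hMnodup : ((Finset.range N).val.map p).Nodup := by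
    apply Multiset.Nodup.map_on
    · intro i hi j hj hpij
      simp only [Finset.mem_val, Finset.mem_range] at hi hj
      by_contra hne
      rcases Nat.lt_or_ge i j with h | h
      · exact absurd hpij (hp i j h hj).ne
      · have h2 : j < i := by omega
        exact absurd hpij.symm (hp j i h2 hi).ne
    · exact (Finset.range N).nodup
  have hQnodup : Q.Nodup := Multiset.nodup_of_le hQ hMnodup
  set J := Q.toFinset with hJ
  have hJval : J.val = Q := by
    rw [hJ, Multiset.toFinset_val, Multiset.Nodup.dedup hQnodup]
  set I := (Finset.range N).filter (fun i => p i ∈ J) with hI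
  have hIsub : I ⊆ Finset.range N := Finset.filter_subset _ _
  have hinj : ∀ i ∈ I, ∀ j ∈ I, p i = p j → i = j := by
    intro i hi j hj hpij
    have hi' := Finset.mem_range.mp (hIsub hi)
    have hj' := Finset.mem_range.mp (hIsub hj)
    by_contra hne
    rcases Nat.lt_or_ge i j with h | h
    · exact absurd hpij (hp i j h hj').ne
    · have h2 : j < i := by omega
      exact absurd hpij.symm (hp j i h2 hi').ne
  have himg : Finset.image p I = J := by
    ext x
    simp only [Finset.mem_image]
    constructor
    · rintro ⟨i, hi, rfl⟩
      exact (Finset.mem_filter.mp hi).2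
    · intro hx
      have hxQ : x ∈ Q := Multiset.mem_toFinset.mp hx
      have hxM : x ∈ (Finset.range N).val.map p := Multiset.mem_of_le hQ hxQ
      obtain ⟨i, hi, rfl⟩ := Multiset.mem_map.mp hxM
      refine ⟨i, ?_, rfl⟩
      exact Finset.mem_filter.mpr ⟨hi, hx⟩
  have hcard : I.card = Q.card := by
    rw [← Finset.card_image_of_injOn hinj, himg, hJ,
      Multiset.toFinset_card_of_nodup hQnodup]
  have hsum : ∑ i ∈ I, p i = Q.sum := by
    have h : ∑ x ∈ Finset.image p I, (fun x : ℕ => x) x = ∑ i ∈ I, (fun x : ℕ => x) (p i) :=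
      Finset.sum_image hinj
    rw [himg] at h
    rw [← h]
    show (J.val.map (fun x : ℕ => x)).sum = Q.sum
    rw [Multiset.map_id', hJval]
  obtain ⟨h1, h2⟩ := sum_bounds N p hmono I hIsub
  rw [hcard, hsum] at h1 h2
  exact ⟨h1, h2⟩

theorem skolem_density_aux (n : ℕ) (a p : ℕ → ℕ)
    (ha : ∀ i j, i ≤ j → j < n → a j ≤ a i)
    (hp : ∀ i j, i < j → j < 2 * n → p i < p j)
    (s t : ℕ → ℕ)
    (hdiff : ∀ i < n, t i < s i ∧ s i - t i = a i)
    (hcover : (Finset.range n).val.map s + (Finset.range n).val.map t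
      = (Finset.range (2 * n)).val.map p) :
    ∀ m, 1 ≤ m → m ≤ n →
      (∑ i ∈ Finset.range m, a i) + ∑ i ∈ Finset.range m, p i
        ≤ ∑ i ∈ Finset.Ico (2 * n - m) (2 * n), p i := by
  intro m _ hmn
  set N := 2 * n with hN
  set S : Multiset ℕ := (Finset.range m).val.map s with hS
  set T : Multiset ℕ := (Finset.range m).val.map t with hT
  have hsub : (Finset.range m).val ≤ (Finset.range n).val :=
    Finset.val_le_iff.mpr (Finset.range_subset_range.mpr hmn)
  have hSle : S ≤ (Finset.range N).val.map p := by
    calc S ≤ (Finset.range n).val.map s := Multiset.map_le_map hsub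
      _ ≤ (Finset.range n).val.map s + (Finset.range n).val.map t := Multiset.le_add_right _ _
      _ = _ := hcover
  have hTle : T ≤ (Finset.range N).val.map p := by
    calc T ≤ (Finset.range n).val.map t := Multiset.map_le_map hsub
      _ ≤ (Finset.range n).val.map s + (Finset.range n).val.map t := Multiset.le_add_left _ _
      _ = _ := hcover
  have hScard : Multiset.card S = m := by simp [hS]
  have hTcard : Multiset.card T = m := by simp [hT]
  have hSsum : S.sum = ∑ i ∈ Finset.range m, s i := rfl
  have hTsum : T.sum = ∑ i ∈ Finset.range m, t i := rfl
  have hST : (∑ i ∈ Finset.range m, a i) + ∑ i ∈ Finset.range m, t i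
      = ∑ i ∈ Finset.range m, s i := by
    rw [← Finset.sum_add_distrib]
    apply Finset.sum_congr rfl
    intro i hi
    have hin : i < n := lt_of_lt_of_le (Finset.mem_range.mp hi) hmn
    have := hdiff i hin
    omega
  have hUp := (msum_bounds N p hp S hSle).2
  have hLo := (msum_bounds N p hp T hTle).1
  rw [hScard, hSsum] at hUp
  rw [hTcard, hTsum] at hLo
  omega

/-- density condition: if `p 0 < p 1 < ... < p (2n-1)` enumerate the set `P`
and `P` can be partitioned into pairs with differences `a 0 ≥ a 1 ≥ ... ≥ a (n-1)`,
then for every `1 ≤ m ≤ n`,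
`a 0 + ... + a (m-1) ≤ (sum of the m largest p's) - (sum of the m smallest p's)`. -/
theorem skolem_density (n : ℕ) (a p : ℕ → ℕ)
    (hApos : ∀ i < n, 0 < a i)
    (ha : ∀ i j, i ≤ j → j < n → a j ≤ a i)
    (hPpos : ∀ i < 2 * n, 0 < p i)
    (hp : ∀ i j, i < j → j < 2 * n → p i < p j)
    (s t : ℕ → ℕ)
    (hdiff : ∀ i < n, t i < s i ∧ s i - t i = a i)
    (hcover : (Finset.range n).val.map s + (Finset.range n).val.map t
      = (Finset.range (2 * n)).val.map p) :
    ∀ m, 1 ≤ m → m ≤ n →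
      (∑ i ∈ Finset.range m, a i) + ∑ i ∈ Finset.range m, p i
        ≤ ∑ i ∈ Finset.Ico (2 * n - m) (2 * n), p i := by
  exact skolem_density_aux n a p ha hp s t hdiff hcover
end

section
/- If the multiset A = {a_1 ≥ a_2 ≥ ... ≥ a_n} is a perfect multi Skolem set (i.e. {1, 2, ..., 2n} can be partitioned into pairs with differences a_1, ..., a_n), then the number of even elements among a_1, ..., a_n is even, and for each 1 ≤ m ≤ n, a_1 + ... + a_m ≤ m(2n - m). -/
open Finset

/-- sum of a finset of positive naturals is at least 1+2+...+card -/
lemma aux_lower (T : Finset ℕ) (hT : ∀ x ∈ T, 1 ≤ x) :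
    ∑ i ∈ Finset.range T.card, (i + 1) ≤ ∑ x ∈ T, x := by
  induction T using Finset.strongInduction with
  | _ T ih =>
    rcases T.eq_empty_or_nonempty with rfl | hne
    · simp
    · set M := T.max' hne with hM
      have hMem : M ∈ T := T.max'_mem hne
      have hsub : T ⊆ Finset.Icc 1 M := by
        intro x hx
        exact Finset.mem_Icc.2 ⟨hT x hx, T.le_max' x hx⟩
      have hcard : T.card ≤ M := by
        have := Finset.card_le_card hsub
        simpa using this
      have herase := ih (T.erase M) (Finset.erase_ssubset hMem)
        (fun x hx => hT x (Finset.mem_of_mem_erase hx))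
      have hcard' : (T.erase M).card = T.card - 1 := Finset.card_erase_of_mem hMem
      have hpos : 1 ≤ T.card := Finset.card_pos.2 hne
      obtain ⟨k, hk⟩ : ∃ k, T.card = k + 1 := ⟨T.card - 1, by omega⟩
      have hsum : ∑ x ∈ T, x = M + ∑ x ∈ T.erase M, x :=
        (Finset.add_sum_erase T id hMem).symm
      rw [hsum, hk, Finset.sum_range_succ]
      have : (T.erase M).card = k := by omega
      rw [this] at herase
      omega

/-- sum of a finset contained in [1,N] is at most N+(N-1)+...+(N-card+1) -/
lemma aux_upper (N : ℕ) : ∀ T : Finset ℕ, T ⊆ Finset.Icc 1 N →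
    ∑ x ∈ T, x ≤ ∑ i ∈ Finset.range T.card, (N - i) := by
  induction N with
  | zero =>
    intro T hT
    have : T = ∅ := by
      rw [Finset.eq_empty_iff_forall_notMem]
      intro x hx
      have := Finset.mem_Icc.1 (hT hx); omega
    simp [this]
  | succ N ih =>
    intro T hT
    by_cases hmem : N + 1 ∈ T
    · have hsub : T.erase (N+1) ⊆ Finset.Icc 1 N := by
        intro x hx
        have hx1 := Finset.mem_of_mem_erase hx
        have hx2 := Finset.ne_of_mem_erase hx
        have := Finset.mem_Icc.1 (hT hx1)
        exact Finset.mem_Icc.2 ⟨this.1, by omega⟩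
      have herase := ih _ hsub
      have hcard' : (T.erase (N+1)).card = T.card - 1 := Finset.card_erase_of_mem hmem
      have hpos : 1 ≤ T.card := Finset.card_pos.2 ⟨_, hmem⟩
      obtain ⟨k, hk⟩ : ∃ k, T.card = k + 1 := ⟨T.card - 1, by omega⟩
      have hsum : ∑ x ∈ T, x = (N+1) + ∑ x ∈ T.erase (N+1), x :=
        (Finset.add_sum_erase T id hmem).symm
      rw [hsum, hk, Finset.sum_range_succ' (fun i => N + 1 - i)]
      have hke : (T.erase (N+1)).card = k := by omega
      rw [hke] at herase
      have : ∑ x ∈ T.erase (N+1), x ≤ ∑ i ∈ Finset.range k, (N + 1 - (i + 1)) := by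
        refine herase.trans (Finset.sum_le_sum ?_)
        intro i _; omega
      omega
    · have hsub : T ⊆ Finset.Icc 1 N := by
        intro x hx
        have h1 := Finset.mem_Icc.1 (hT hx)
        have h2 : x ≠ N + 1 := fun h => hmem (h ▸ hx)
        exact Finset.mem_Icc.2 ⟨h1.1, by omega⟩
      exact (ih _ hsub).trans (Finset.sum_le_sum fun i _ => by omega)

/-- if the multiset `{a 0 ≥ a 1 ≥ ... ≥ a (n-1)}` is a perfect multi Skolem set
(i.e. `{1,...,2n}` can be partitioned into pairs with these differences), then the number of
even elements among the `a i` is even, and `a 0 + ... + a (m-1) ≤ m * (2n - m)` for `1 ≤ m ≤ n`. -/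
theorem perfect_multi_skolem_necessary (n : ℕ) (a : ℕ → ℕ)
    (hApos : ∀ i < n, 0 < a i)
    (ha : ∀ i j, i ≤ j → j < n → a j ≤ a i)
    (s t : ℕ → ℕ)
    (hdiff : ∀ i < n, t i < s i ∧ s i - t i = a i)
    (hcover : (Finset.range n).val.map s + (Finset.range n).val.map t
      = (Finset.Icc 1 (2 * n)).val) :
    Even (((Finset.range n).filter (fun i => Even (a i))).card) ∧
    ∀ m, 1 ≤ m → m ≤ n → ∑ i ∈ Finset.range m, a i ≤ m * (2 * n - m) := by
  rcases Nat.eq_zero_or_pos n with rfl | hn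
  · constructor
    · simp
    · intro m hm1 hm0; omega
  -- basic facts from the cover
  have hnd : ((Finset.range n).val.map s + (Finset.range n).val.map t).Nodup := by
    rw [hcover]; exact (Finset.Icc 1 (2 * n)).nodup
  have hnds : ((Finset.range n).val.map s).Nodup :=
    Multiset.nodup_of_le (Multiset.le_add_right _ _) hnd
  have hndt : ((Finset.range n).val.map t).Nodup :=
    Multiset.nodup_of_le (Multiset.le_add_left _ _) hnd
  have hsinj := Multiset.inj_on_of_nodup_map hnds
  have htinj := Multiset.inj_on_of_nodup_map hndt
  have hsmem : ∀ i < n, s i ∈ Finset.Icc 1 (2 * n) := by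
    intro i hi
    have h1 : s i ∈ (Finset.range n).val.map s :=
      Multiset.mem_map_of_mem _ (by simpa using hi)
    have h2 : s i ∈ (Finset.range n).val.map s + (Finset.range n).val.map t :=
      Multiset.mem_add.2 (Or.inl h1)
    rw [hcover] at h2; exact h2
  have htmem : ∀ i < n, t i ∈ Finset.Icc 1 (2 * n) := by
    intro i hi
    have h1 : t i ∈ (Finset.range n).val.map t :=
      Multiset.mem_map_of_mem _ (by simpa using hi)
    have h2 : t i ∈ (Finset.range n).val.map s + (Finset.range n).val.map t :=
      Multiset.mem_add.2 (Or.inr h1)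
    rw [hcover] at h2; exact h2
  -- bounds on partial sums of s and t for any m ≤ n
  have hsbound : ∀ m ≤ n, ∑ i ∈ Finset.range m, s i ≤ ∑ i ∈ Finset.range m, (2 * n - i) := by
    intro m hmn
    have hinj : ∀ x ∈ Finset.range m, ∀ y ∈ Finset.range m, s x = s y → x = y := by
      intro x hx y hy h
      have hx' : x ∈ (Finset.range n).val := by
        simp only [Finset.range_val, Multiset.mem_range]
        exact lt_of_lt_of_le (Finset.mem_range.1 hx) hmn
      have hy' : y ∈ (Finset.range n).val := by
        simp only [Finset.range_val, Multiset.mem_range]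
        exact lt_of_lt_of_le (Finset.mem_range.1 hy) hmn
      exact hsinj x hx' y hy' h
    have hcard : ((Finset.range m).image s).card = m := by
      rw [Finset.card_image_of_injOn (fun x hx y hy h => hinj x hx y hy h)]
      exact Finset.card_range m
    have hsub : (Finset.range m).image s ⊆ Finset.Icc 1 (2 * n) := by
      intro x hx
      obtain ⟨i, hi, rfl⟩ := Finset.mem_image.1 hx
      exact hsmem i (lt_of_lt_of_le (Finset.mem_range.1 hi) hmn)
    have := aux_upper (2 * n) _ hsub
    rw [hcard, Finset.sum_image hinj] at this
    exact this
  have htbound : ∀ m ≤ n, ∑ i ∈ Finset.range m, (i + 1) ≤ ∑ i ∈ Finset.range m, t i := by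
    intro m hmn
    have hinj : ∀ x ∈ Finset.range m, ∀ y ∈ Finset.range m, t x = t y → x = y := by
      intro x hx y hy h
      have hx' : x ∈ (Finset.range n).val := by
        simp only [Finset.range_val, Multiset.mem_range]
        exact lt_of_lt_of_le (Finset.mem_range.1 hx) hmn
      have hy' : y ∈ (Finset.range n).val := by
        simp only [Finset.range_val, Multiset.mem_range]
        exact lt_of_lt_of_le (Finset.mem_range.1 hy) hmn
      exact htinj x hx' y hy' h
    have hcard : ((Finset.range m).image t).card = m := by
      rw [Finset.card_image_of_injOn (fun x hx y hy h => hinj x hx y hy h)]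
      exact Finset.card_range m
    have hpos : ∀ x ∈ (Finset.range m).image t, 1 ≤ x := by
      intro x hx
      obtain ⟨i, hi, rfl⟩ := Finset.mem_image.1 hx
      exact (Finset.mem_Icc.1 (htmem i (lt_of_lt_of_le (Finset.mem_range.1 hi) hmn))).1
    have := aux_lower _ hpos
    rw [hcard, Finset.sum_image hinj] at this
    exact this
  -- a i + t i = s i
  have haeq : ∀ m ≤ n, ∑ i ∈ Finset.range m, a i + ∑ i ∈ Finset.range m, t i
      = ∑ i ∈ Finset.range m, s i := by
    intro m hmn
    rw [← Finset.sum_add_distrib]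
    apply Finset.sum_congr rfl
    intro i hi
    have hin : i < n := lt_of_lt_of_le (Finset.mem_range.1 hi) hmn
    have := hdiff i hin
    omega
  constructor
  · -- parity part
    have hQ : ∑ i ∈ Finset.range (2 * n), i = n * (2 * n - 1) := by
      have h1 := Finset.sum_range_id_mul_two (2 * n)
      have h2 : 2 * n * (2 * n - 1) = (n * (2 * n - 1)) * 2 := by
        generalize 2 * n - 1 = c; ring
      rw [h2] at h1
      exact Nat.eq_of_mul_eq_mul_right two_pos h1
    have hP : ∑ x ∈ Finset.Icc 1 (2 * n), x = 2 * n + n * (2 * n - 1) := by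
      have h1 : Finset.Icc 1 (2 * n) = Finset.Ico 1 (2 * n + 1) := by
        rw [Finset.Ico_add_one_right_eq_Icc]
      rw [h1, Finset.sum_Ico_eq_sum_range]
      simp only [Nat.add_sub_cancel]
      have : ∑ i ∈ Finset.range (2 * n), (1 + i) = 2 * n + ∑ i ∈ Finset.range (2 * n), i := by
        rw [Finset.sum_add_distrib, Finset.sum_const, Finset.card_range, smul_eq_mul, mul_one]
      rw [this, hQ]
    have hQmod : n * (2 * n - 1) % 2 = n % 2 := by
      rw [Nat.mul_mod]
      have : (2 * n - 1) % 2 = 1 := by omega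
      rw [this, mul_one]
      omega
    have hst : ∑ i ∈ Finset.range n, s i + ∑ i ∈ Finset.range n, t i
        = ∑ x ∈ Finset.Icc 1 (2 * n), x := by
      have := congrArg Multiset.sum hcover
      rw [Multiset.sum_add] at this
      rw [Finset.sum_eq_multiset_sum, Finset.sum_eq_multiset_sum, Finset.sum_eq_multiset_sum,
        Multiset.map_id']
      exact this
    have hamod : (∑ i ∈ Finset.range n, a i) % 2
        = ((Finset.range n).filter (fun i => ¬ Even (a i))).card % 2 := by
      rw [Finset.sum_nat_mod, Finset.card_filter]
      congr 1
      apply Finset.sum_congr rfl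
      intro i _
      by_cases h : Even (a i)
      · simp [h, Nat.even_iff.1 h]
      · have : a i % 2 = 1 := Nat.odd_iff.1 (Nat.not_even_iff_odd.1 h)
        simp [h, this]
    have hcards : ((Finset.range n).filter (fun i => Even (a i))).card
        + ((Finset.range n).filter (fun i => ¬ Even (a i))).card = n := by
      rw [Finset.card_filter_add_card_filter_not, Finset.card_range]
    have han := haeq n le_rfl
    rw [Nat.even_iff]
    omega
  · -- sum bound part
    intro m hm1 hmn
    have hs := hsbound m hmn
    have ht := htbound m hmn
    have hae := haeq m hmn
    have hkey : ∑ i ∈ Finset.range m, (2 * n - i)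
        = m * (2 * n - m) + ∑ i ∈ Finset.range m, (i + 1) := by
      have h1 : ∑ i ∈ Finset.range m, (2 * n - i)
          = ∑ i ∈ Finset.range m, ((2 * n - m) + (m - i)) := by
        apply Finset.sum_congr rfl
        intro i hi
        have := Finset.mem_range.1 hi
        omega
      rw [h1, Finset.sum_add_distrib, Finset.sum_const, Finset.card_range, smul_eq_mul]
      congr 1
      have h2 := Finset.sum_range_reflect (fun i => i + 1) m
      rw [← h2]
      apply Finset.sum_congr rfl
      intro i hi
      have := Finset.mem_range.1 hi
      omega
    omega
end

section
/- The number of perfect extremal multi Skolem-type sequences of order n is n!. Equivalently, the number of partitions of {1, 2, ..., 2n} into n pairs (s_i, t_i) with s_i > t_i such that the sum of the differences s_i - t_i equals n^2 is n!. -/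
open Finset

lemma gauss (k : ℕ) : (∑ x ∈ Icc 1 k, x) * 2 = k * (k + 1) := by
  induction k with
  | zero => simp
  | succ k ih =>
    rw [Finset.sum_Icc_succ_top (by omega)]
    ring_nf
    ring_nf at ih
    omega

lemma icc_split {n : ℕ} : (Icc 1 n).val + (Ioc n (2*n)).val = (Icc 1 (2*n)).val := by
  have hd : Disjoint (Icc 1 n) (Ioc n (2*n)) := by
    simp [Finset.disjoint_left, Finset.mem_Icc, Finset.mem_Ioc]
    omega
  have : Icc 1 n ∪ Ioc n (2*n) = Icc 1 (2*n) := by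
    ext x; simp [Finset.mem_Icc, Finset.mem_Ioc, Finset.mem_union]; omega
  rw [← this, ← Finset.disjUnion_eq_union _ _ hd]
  rfl

lemma min_sum_set : ∀ (k : ℕ) (S : Finset ℕ), 0 ∉ S → S.card = k →
    (∑ x ∈ S, x) * 2 ≤ k * (k + 1) → S = Icc 1 k := by
  intro k
  induction k with
  | zero => intro S _ hc _; simpa using Finset.card_eq_zero.mp hc
  | succ k ih =>
    intro S h0 hc hs
    have hne : S.Nonempty := Finset.card_pos.mp (by omega)
    set m := S.max' hne with hm
    have hmS : m ∈ S := S.max'_mem hne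
    have hsub : S ⊆ Icc 1 m := by
      intro x hx
      simp only [Finset.mem_Icc]
      refine ⟨?_, S.le_max' x hx⟩
      rcases Nat.eq_zero_or_pos x with h|h
      · exact absurd (h ▸ hx) h0
      · omega
    have hmge : k + 1 ≤ m := by
      have := Finset.card_le_card hsub
      rw [hc] at this
      simpa [Nat.card_Icc] using this
    have hsum : (∑ x ∈ S, x) = (∑ x ∈ S.erase m, x) + m :=
      (Finset.sum_erase_add S (fun x => x) hmS).symm
    have h0' : 0 ∉ S.erase m := fun h => h0 (Finset.mem_of_mem_erase h)
    have hc' : (S.erase m).card = k := by rw [Finset.card_erase_of_mem hmS, hc]; omega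
    have hs' : (∑ x ∈ S.erase m, x) * 2 ≤ k * (k + 1) := by nlinarith
    have hE := ih _ h0' hc' hs'
    have hsumE : (∑ x ∈ S.erase m, x) * 2 = k * (k+1) := by rw [hE]; exact gauss k
    have hmle : m ≤ k + 1 := by nlinarith
    have : m = k + 1 := le_antisymm hmle hmge
    rw [← Finset.insert_erase hmS, hE, this, Finset.insert_Icc_right_eq_Icc_add_one (by omega)]


lemma subset_of_maps {S T : Finset ℕ} {M : Finset (ℕ × ℕ)}
    (hf : M.val.map Prod.fst = S.val) (hs : M.val.map Prod.snd = T.val) :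
    M ⊆ S ×ˢ T := by
  intro q hq
  rw [Finset.mem_product]
  constructor
  · rw [← Finset.mem_val, ← hf]; exact Multiset.mem_map_of_mem _ (Finset.mem_val.mpr hq)
  · rw [← Finset.mem_val, ← hs]; exact Multiset.mem_map_of_mem _ (Finset.mem_val.mpr hq)

lemma exists_pair {S T : Finset ℕ} {M : Finset (ℕ × ℕ)}
    (hf : M.val.map Prod.fst = S.val) (hs : M.val.map Prod.snd = T.val)
    {a : ℕ} (ha : a ∈ S) : ∃ b ∈ T, (a, b) ∈ M := by
  have : a ∈ M.val.map Prod.fst := by rw [hf]; exact ha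
  obtain ⟨p, hp, hpa⟩ := Multiset.mem_map.mp this
  refine ⟨p.2, ?_, ?_⟩
  · rw [← Finset.mem_val, ← hs]; exact Multiset.mem_map_of_mem _ hp
  · have : p = (a, p.2) := by rw [← hpa]
    rw [← this]; exact Finset.mem_val.mp hp

lemma pair_unique {S : Finset ℕ} {M : Finset (ℕ × ℕ)}
    (hf : M.val.map Prod.fst = S.val) {a b : ℕ} (hab : (a, b) ∈ M) :
    (∑ p ∈ M.filter (fun p => p.1 = a), p.2) = b := by
  have hnd : (M.val.map Prod.fst).Nodup := hf ▸ S.nodup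
  have hinj := Multiset.inj_on_of_nodup_map hnd
  have hfil : M.filter (fun p => p.1 = a) = {(a, b)} := by
    ext q
    simp only [Finset.mem_filter, Finset.mem_singleton]
    constructor
    · rintro ⟨hq, hq1⟩
      exact hinj q (Finset.mem_val.mpr hq) (a, b) (Finset.mem_val.mpr hab) (by simpa using hq1)
    · rintro rfl; exact ⟨hab, rfl⟩
  rw [hfil]; simp

lemma erase_maps {S T : Finset ℕ} {M : Finset (ℕ × ℕ)} {a b : ℕ}
    (hf : M.val.map Prod.fst = S.val) (hs : M.val.map Prod.snd = T.val)
    (hab : (a, b) ∈ M) :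
    (M.erase (a, b)).val.map Prod.fst = (S.erase a).val ∧
    (M.erase (a, b)).val.map Prod.snd = (T.erase b).val := by
  have hmv : (a, b) ∈ M.val := Finset.mem_val.mpr hab
  have hr : (a, b) ::ₘ M.val.erase (a, b) = M.val := Multiset.cons_erase hmv
  have haS : a ∈ S.val := by rw [← hf, ← hr]; simp
  have hbT : b ∈ T.val := by rw [← hs, ← hr]; simp
  constructor
  · rw [Finset.erase_val, Finset.erase_val]
    have h1 : a ::ₘ (M.val.erase (a, b)).map Prod.fst = a ::ₘ S.val.erase a := by
      rw [Multiset.cons_erase haS, ← hf, ← hr]; simp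
    exact (Multiset.cons_inj_right a).mp h1
  · rw [Finset.erase_val, Finset.erase_val]
    have h1 : b ::ₘ (M.val.erase (a, b)).map Prod.snd = b ::ₘ T.val.erase b := by
      rw [Multiset.cons_erase hbT, ← hs, ← hr]; simp
    exact (Multiset.cons_inj_right b).mp h1

lemma insert_maps {S T : Finset ℕ} {N : Finset (ℕ × ℕ)} {a b : ℕ}
    (haS : a ∈ S) (hbT : b ∈ T)
    (hf : N.val.map Prod.fst = (S.erase a).val) (hs : N.val.map Prod.snd = (T.erase b).val) :
    (a, b) ∉ N ∧ (insert (a, b) N).val.map Prod.fst = S.val ∧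
      (insert (a, b) N).val.map Prod.snd = T.val := by
  have hnm : (a, b) ∉ N := by
    intro h
    have : a ∈ (S.erase a).val := by
      rw [← hf]; exact Multiset.mem_map_of_mem _ (Finset.mem_val.mpr h)
    exact Finset.notMem_erase a S (Finset.mem_val.mp this)
  refine ⟨hnm, ?_, ?_⟩
  · rw [Finset.insert_val_of_notMem hnm, Multiset.map_cons, hf, Finset.erase_val,
      Multiset.cons_erase (Finset.mem_val.mpr haS)]
  · rw [Finset.insert_val_of_notMem hnm, Multiset.map_cons, hs, Finset.erase_val,
      Multiset.cons_erase (Finset.mem_val.mpr hbT)]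

lemma count_core : ∀ (k : ℕ) (S T : Finset ℕ), S.card = k → T.card = k →
    (((S ×ˢ T).powerset).filter (fun M : Finset (ℕ × ℕ) =>
      M.val.map Prod.fst = S.val ∧ M.val.map Prod.snd = T.val)).card = k.factorial := by
  intro k
  induction k with
  | zero =>
    intro S T hS hT
    rw [Finset.card_eq_zero.mp hS, Finset.card_eq_zero.mp hT]
    simp [Finset.filter_singleton]
  | succ k ih =>
    intro S T hS hT
    obtain ⟨a, ha⟩ := Finset.card_pos.mp (show 0 < S.card by omega)
    set f : Finset (ℕ × ℕ) → ℕ := fun M => ∑ p ∈ M.filter (fun p => p.1 = a), p.2 with hfdef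
    set A := (((S ×ˢ T).powerset).filter (fun M : Finset (ℕ × ℕ) =>
      M.val.map Prod.fst = S.val ∧ M.val.map Prod.snd = T.val)) with hA
    have hmemA : ∀ M ∈ A, M.val.map Prod.fst = S.val ∧ M.val.map Prod.snd = T.val := by
      intro M hM
      rw [hA, Finset.mem_filter] at hM
      exact hM.2
    have key : ∀ M ∈ A, ∃ b ∈ T, (a, b) ∈ M ∧ f M = b := by
      intro M hM
      obtain ⟨hf1, hs1⟩ := hmemA M hM
      obtain ⟨b, hbT, hab⟩ := exists_pair hf1 hs1 ha
      exact ⟨b, hbT, hab, pair_unique hf1 hab⟩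
    have hmem : ∀ M ∈ A, f M ∈ T := by
      intro M hM
      obtain ⟨b, hbT, _, hfb⟩ := key M hM
      rw [hfb]; exact hbT
    rw [Finset.card_eq_sum_card_fiberwise hmem]
    have hfib : ∀ b ∈ T, (A.filter (fun M => f M = b)).card = k.factorial := by
      intro b hbT
      have hcard : ((((S.erase a) ×ˢ (T.erase b)).powerset).filter
          (fun N : Finset (ℕ × ℕ) =>
            N.val.map Prod.fst = (S.erase a).val ∧
            N.val.map Prod.snd = (T.erase b).val)).card = k.factorial :=
        ih _ _ (by rw [Finset.card_erase_of_mem ha, hS]; omega) (by rw [Finset.card_erase_of_mem hbT, hT]; omega)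
      have habM : ∀ M ∈ A.filter (fun M => f M = b), (a, b) ∈ M := by
        intro M hM
        rw [Finset.mem_filter] at hM
        obtain ⟨b', hb'T, hab', hfb'⟩ := key M hM.1
        have : b' = b := by rw [← hfb', hM.2]
        rwa [← this]
      rw [← hcard]
      refine Finset.card_bij' (fun M _ => M.erase (a, b)) (fun N _ => insert (a, b) N)
        ?_ ?_ ?_ ?_
      · intro M hM
        obtain ⟨hf1, hs1⟩ := hmemA M (Finset.mem_filter.mp hM).1
        obtain ⟨he1, he2⟩ := erase_maps hf1 hs1 (habM M hM)
        rw [Finset.mem_filter, Finset.mem_powerset]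
        exact ⟨subset_of_maps he1 he2, he1, he2⟩
      · intro N hN
        rw [Finset.mem_filter] at hN
        obtain ⟨_, hf1, hs1⟩ := hN
        obtain ⟨hnm, hif, his⟩ := insert_maps ha hbT hf1 hs1
        rw [Finset.mem_filter, hA, Finset.mem_filter, Finset.mem_powerset]
        refine ⟨⟨subset_of_maps hif his, hif, his⟩, ?_⟩
        exact pair_unique hif (Finset.mem_insert_self _ _)
      · intro M hM
        exact Finset.insert_erase (habM M hM)
      · intro N hN
        rw [Finset.mem_filter] at hN
        obtain ⟨_, hf1, hs1⟩ := hN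
        obtain ⟨hnm, _, _⟩ := insert_maps ha hbT hf1 hs1
        exact Finset.erase_insert hnm
    rw [Finset.sum_congr rfl hfib, Finset.sum_const, hT, Nat.factorial_succ, smul_eq_mul]

lemma sum_icc_val (a b : ℕ) : (Icc a b).val.sum = ∑ x ∈ Icc a b, x := by
  rw [Finset.sum]
  simp

lemma sum_ioc_val (a b : ℕ) : (Ioc a b).val.sum = ∑ x ∈ Ioc a b, x := by
  rw [Finset.sum]
  simp

lemma char (n : ℕ) (M : Finset (ℕ × ℕ)) :
    (M.val.map Prod.fst + M.val.map Prod.snd = (Icc 1 (2*n)).val ∧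
      (∀ p ∈ M, p.2 < p.1) ∧ (∑ p ∈ M, (p.1 - p.2)) = n^2) ↔
    (M.val.map Prod.fst = (Ioc n (2*n)).val ∧ M.val.map Prod.snd = (Icc 1 n).val) := by
  have hring1 : 2*n*(2*n+1) = 4*n^2 + 2*n := by ring
  have hIocsum : (Ioc n (2*n)).val.sum * 2 = 3*n^2 + n := by
    have h1 := congrArg Multiset.sum (icc_split (n := n))
    rw [Multiset.sum_add] at h1
    have h2 := gauss n
    have h3 := gauss (2*n)
    rw [sum_icc_val, sum_icc_val] at h1
    have : 2*n*(2*n+1) = 4*n^2+2*n := hring1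
    have hn : n*(n+1) = n^2 + n := by ring
    omega
  have hFsum : ∀ (h2 : ∀ p ∈ M, p.2 < p.1),
      (∑ p ∈ M, (p.1 - p.2)) + (∑ p ∈ M, p.2) = ∑ p ∈ M, p.1 := by
    intro h2
    rw [← Finset.sum_add_distrib]
    exact Finset.sum_congr rfl (fun p hp => by have := h2 p hp; omega)
  have hmapf : (M.val.map Prod.fst).sum = ∑ p ∈ M, p.1 := rfl
  have hmaps : (M.val.map Prod.snd).sum = ∑ p ∈ M, p.2 := rfl
  constructor
  · rintro ⟨h1, h2, h3⟩
    have hnd : (M.val.map Prod.fst + M.val.map Prod.snd).Nodup := h1 ▸ (Icc 1 (2*n)).nodup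
    rw [Multiset.nodup_add] at hnd
    obtain ⟨hndf, hnds, hdisj⟩ := hnd
    have hcardM : M.card = n := by
      have := congrArg Multiset.card h1
      simp [Nat.card_Icc] at this
      omega
    -- the snd finset
    set T' : Finset ℕ := ⟨M.val.map Prod.snd, hnds⟩ with hT'
    have hT'card : T'.card = n := by
      simp only [hT', Finset.card, Multiset.card_map]
      exact hcardM
    have h0T' : 0 ∉ T' := by
      intro h0
      have : (0 : ℕ) ∈ (Icc 1 (2*n)).val := by
        rw [← h1]
        exact Multiset.mem_add.mpr (Or.inr h0)
      simp [Finset.mem_val] at this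
    have hsumT' : (∑ x ∈ T', x) * 2 = n * (n + 1) := by
      have hsum1 : (M.val.map Prod.fst).sum + (M.val.map Prod.snd).sum
          = (Icc 1 (2*n)).val.sum := by rw [← Multiset.sum_add, h1]
      rw [sum_icc_val] at hsum1
      have hg := gauss (2*n)
      have hF := hFsum h2
      rw [hmapf, hmaps] at hsum1
      have hTsum : (∑ x ∈ T', x) = ∑ p ∈ M, p.2 := by
        rw [Finset.sum]
        simp only [hT']
        rw [Multiset.map_id']
        exact hmaps
      have hn2 : n*(n+1) = n^2+n := by ring
      omega
    have hT'eq : T' = Icc 1 n := min_sum_set n T' h0T' hT'card (le_of_eq hsumT')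
    have hsndeq : M.val.map Prod.snd = (Icc 1 n).val := by
      have := congrArg Finset.val hT'eq
      simpa [hT'] using this
    refine ⟨?_, hsndeq⟩
    have : M.val.map Prod.fst + (Icc 1 n).val = (Ioc n (2*n)).val + (Icc 1 n).val := by
      rw [add_comm ((Ioc n (2*n)).val), icc_split, ← h1, hsndeq]
    exact add_right_cancel this
  · rintro ⟨hf, hs⟩
    have hlt : ∀ p ∈ M, p.2 < p.1 := by
      intro p hp
      have h1 : p.1 ∈ (Ioc n (2*n)).val := by
        rw [← hf]; exact Multiset.mem_map_of_mem _ (Finset.mem_val.mpr hp)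
      have h2 : p.2 ∈ (Icc 1 n).val := by
        rw [← hs]; exact Multiset.mem_map_of_mem _ (Finset.mem_val.mpr hp)
      rw [Finset.mem_val, Finset.mem_Ioc] at h1
      rw [Finset.mem_val, Finset.mem_Icc] at h2
      omega
    refine ⟨?_, hlt, ?_⟩
    · rw [hf, hs, add_comm]
      exact icc_split
    · have hF := hFsum hlt
      have h1 : (∑ p ∈ M, p.1) * 2 = 3*n^2 + n := by
        rw [← hmapf, hf]
        exact hIocsum
      have h2 : (∑ p ∈ M, p.2) * 2 = n^2 + n := by
        rw [← hmaps, hs, sum_icc_val]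
        have := gauss n
        have : n*(n+1) = n^2+n := by ring
        omega
      omega


/-- the number of partitions of `{1,...,2n}` into `n` pairs `(s, t)` with `s > t`
such that the sum of the differences `s - t` equals `n^2` is `n!`
(the number of perfect extremal multi Skolem-type sequences of order `n`). -/
theorem count_extremal_partitions (n : ℕ) :
    ((Finset.Icc 1 (2 * n) ×ˢ Finset.Icc 1 (2 * n)).powerset.filter
        (fun M : Finset (ℕ × ℕ) =>
          M.val.map Prod.fst + M.val.map Prod.snd = (Finset.Icc 1 (2 * n)).val ∧
          (∀ p ∈ M, p.2 < p.1) ∧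
          (∑ p ∈ M, (p.1 - p.2)) = n ^ 2)).card = n.factorial := by
  have hset : ((Finset.Icc 1 (2 * n) ×ˢ Finset.Icc 1 (2 * n)).powerset.filter
        (fun M : Finset (ℕ × ℕ) =>
          M.val.map Prod.fst + M.val.map Prod.snd = (Finset.Icc 1 (2 * n)).val ∧
          (∀ p ∈ M, p.2 < p.1) ∧
          (∑ p ∈ M, (p.1 - p.2)) = n ^ 2))
      = ((Ioc n (2*n) ×ˢ Icc 1 n).powerset.filter (fun M : Finset (ℕ × ℕ) =>
          M.val.map Prod.fst = (Ioc n (2*n)).val ∧ M.val.map Prod.snd = (Icc 1 n).val)) := by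
    ext M
    simp only [Finset.mem_filter, Finset.mem_powerset]
    constructor
    · rintro ⟨hsub, hcond⟩
      have h := (char n M).mp hcond
      exact ⟨subset_of_maps h.1 h.2, h⟩
    · rintro ⟨hsub, hmaps⟩
      refine ⟨?_, (char n M).mpr hmaps⟩
      refine (subset_of_maps hmaps.1 hmaps.2).trans ?_
      refine Finset.product_subset_product ?_ ?_ <;> intro x hx <;>
        simp only [Finset.mem_Ioc, Finset.mem_Icc] at hx ⊢ <;> omega
  rw [hset]
  exact count_core n _ _ (by simp [Nat.card_Ioc]; omega) (by simp [Nat.card_Icc])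
end

section
/- For any partition of {1, 2, ..., 2n} into n pairs (s_i, t_i) with s_i > t_i, if the sum of differences Σ(s_i - t_i) equals n^2, then t_i ≤ n and s_i ≥ n+1 for every i. -/
/-- Any finset of positive naturals of cardinality `m` has sum at least `m*(m+1)/2`. -/
lemma aux_sum_ge (T : Finset ℕ) (h0 : 0 ∉ T) : T.card * (T.card + 1) ≤ 2 * ∑ x ∈ T, x := by
  classical
  induction T using Finset.strongInduction with
  | _ T ih =>
    rcases T.eq_empty_or_nonempty with rfl | hne
    · simp
    · set M := T.max' hne with hM
      have hMem : M ∈ T := T.max'_mem hne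
      have hsub : T ⊆ Finset.Icc 1 M := by
        intro x hx
        simp only [Finset.mem_Icc]
        exact ⟨Nat.one_le_iff_ne_zero.mpr (fun h => h0 (h ▸ hx)), T.le_max' x hx⟩
      have hcard : T.card ≤ M := by
        have := Finset.card_le_card hsub
        simpa using this
      have herase := ih (T.erase M) (Finset.erase_ssubset hMem)
        (fun h => h0 (Finset.mem_of_mem_erase h))
      have hce : (T.erase M).card = T.card - 1 := Finset.card_erase_of_mem hMem
      have hse : ∑ x ∈ T.erase M, x + M = ∑ x ∈ T, x := Finset.sum_erase_add T _ hMem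
      obtain ⟨c, hc⟩ : ∃ c, T.card = c + 1 :=
        ⟨T.card - 1, by have := Finset.card_pos.mpr hne; omega⟩
      rw [hce, hc] at herase
      simp only [Nat.add_sub_cancel] at herase
      rw [hc] at hcard ⊢
      nlinarith [herase, hse, hcard]

lemma aux_gauss (m : ℕ) : (∑ x ∈ Finset.Icc 1 m, x) * 2 = m * (m + 1) := by
  induction m with
  | zero => simp
  | succ k ih =>
    rw [Finset.sum_Icc_succ_top (by omega), add_mul, ih]
    ring

/-- for any partition of `{1,...,2n}` into `n` pairs `(s i, t i)` with
`s i > t i`, if `∑ (s i - t i) = n^2` then `t i ≤ n` and `s i ≥ n + 1` for every `i`. -/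
theorem extremal_partition_halves (n : ℕ) (s t : Fin n → ℕ)
    (hlt : ∀ i, t i < s i)
    (hcover : Multiset.map s Finset.univ.val + Multiset.map t Finset.univ.val
      = (Finset.Icc 1 (2 * n)).val)
    (hsum : ∑ i, (s i - t i) = n ^ 2) :
    ∀ i, t i ≤ n ∧ n + 1 ≤ s i := by
  classical
  set Ms := Multiset.map s Finset.univ.val with hMsdef
  set Mt := Multiset.map t Finset.univ.val with hMtdef
  have hnodup : (Ms + Mt).Nodup := by rw [hcover]; exact (Finset.Icc 1 (2 * n)).nodup
  rw [Multiset.nodup_add] at hnodup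
  obtain ⟨hnMs, hnMt, hdisj⟩ := hnodup
  -- sums
  have hsumIcc : (∑ x ∈ Finset.Icc 1 (2 * n), x) * 2 = (2 * n) * (2 * n + 1) :=
    aux_gauss (2 * n)
  have hMsSum : Ms.sum = ∑ i, s i := rfl
  have hMtSum : Mt.sum = ∑ i, t i := rfl
  have htotal : (∑ i, s i) + (∑ i, t i) = ∑ x ∈ Finset.Icc 1 (2 * n), x := by
    have := congrArg Multiset.sum hcover
    rw [Multiset.sum_add, hMsSum, hMtSum, Finset.sum_val] at this
    simpa using this
  have hsub : ∑ i, (s i - t i) = (∑ i, s i) - (∑ i, t i) := by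
    exact Finset.sum_tsub_distrib Finset.univ (fun i _ => (hlt i).le)
  have hle : (∑ i, t i) ≤ (∑ i, s i) :=
    Finset.sum_le_sum (fun i _ => (hlt i).le)
  have hkey : (∑ i, t i) * 2 = n * (n + 1) := by
    have h1 : (∑ i, s i) - (∑ i, t i) = n ^ 2 := hsub ▸ hsum
    have h2 : ((∑ i, s i) + (∑ i, t i)) * 2 = (2 * n) * (2 * n + 1) := by
      rw [htotal]; exact hsumIcc
    have e1 : (2 * n) * (2 * n + 1) = 4 * n ^ 2 + 2 * n := by ring
    have e2 : n * (n + 1) = n ^ 2 + n := by ring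
    omega
  -- the finset of t-values
  set T : Finset ℕ := ⟨Mt, hnMt⟩ with hTdef
  have hTsum : ∑ x ∈ T, x = ∑ i, t i := by
    rw [← hMtSum]; simp [Finset.sum, hTdef]
  have hTcard : T.card = n := by
    simp [hTdef, Finset.card, hMtdef]
  have hMtmem : ∀ x ∈ Mt, x ∈ Finset.Icc 1 (2 * n) := by
    intro x hx
    have : x ∈ Ms + Mt := Multiset.mem_add.mpr (Or.inr hx)
    rw [hcover] at this
    exact this
  have h0T : 0 ∉ T := by
    intro h
    have := hMtmem 0 h
    simp at this
  -- all t-values are ≤ n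
  have hTle : ∀ x ∈ T, x ≤ n := by
    by_contra h
    push_neg at h
    obtain ⟨a, haT, han⟩ := h
    have hcerase : (T.erase a).card = n - 1 := by
      rw [Finset.card_erase_of_mem haT, hTcard]
    have h0e : 0 ∉ T.erase a := fun h => h0T (Finset.mem_of_mem_erase h)
    have hge := aux_sum_ge (T.erase a) h0e
    rw [hcerase] at hge
    have hse : ∑ x ∈ T.erase a, x + a = ∑ x ∈ T, x := Finset.sum_erase_add T _ haT
    have hnpos : 1 ≤ n := hTcard ▸ Finset.card_pos.mpr ⟨a, haT⟩
    rw [hTsum] at hse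
    obtain ⟨m, rfl⟩ : ∃ m, n = m + 1 := ⟨n - 1, by omega⟩
    simp only [Nat.add_sub_cancel] at hge
    nlinarith [hkey, hse, hge, han]
  have hTeq : T = Finset.Icc 1 n := by
    apply Finset.eq_of_subset_of_card_le
    · intro x hx
      have h1 : 1 ≤ x := (Finset.mem_Icc.mp (hMtmem x hx)).1
      exact Finset.mem_Icc.mpr ⟨h1, hTle x hx⟩
    · rw [hTcard]; simp
  intro i
  have htiT : t i ∈ T := (Multiset.mem_map.mpr ⟨i, Finset.mem_univ i, rfl⟩ : t i ∈ Mt)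
  have hsiMs : s i ∈ Ms := Multiset.mem_map.mpr ⟨i, Finset.mem_univ i, rfl⟩
  have hti : t i ≤ n := hTle _ htiT
  have hsinT : s i ∉ T := fun h => Multiset.disjoint_left.mp hdisj hsiMs h
  have hsiIcc : s i ∈ Finset.Icc 1 (2 * n) := by
    have : s i ∈ Ms + Mt := Multiset.mem_add.mpr (Or.inl hsiMs)
    rw [hcover] at this
    exact this
  have h1s : 1 ≤ s i := (Finset.mem_Icc.mp hsiIcc).1
  refine ⟨hti, ?_⟩
  by_contra h
  push_neg at h
  exact hsinT (hTeq ▸ Finset.mem_Icc.mpr ⟨h1s, by omega⟩)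
end

section
/- If there exists a permutation π of {1, ..., n} whose displacement multiset {π(i) - i} equals the sorted pattern α = (a_1 ≥ a_2 ≥ ... ≥ a_n), then: (1) for each 1 ≤ m ≤ n, a_1 + ... + a_m ≤ m(n - m), with equality when m = n (so the total sum is 0); and (2) if n is even, the number of even entries in α is even, while if n is odd, the number of odd entries in α is even. -/
private lemma disp_gauss (t : ℕ) : 2 * ∑ i ∈ Finset.range t, (i : ℤ) = t * (t - 1) := by
  induction t with
  | zero => simp
  | succ t ih =>
    rw [Finset.sum_range_succ]
    push_cast
    push_cast at ih
    ring_nf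
    ring_nf at ih
    linarith

private lemma disp_strictMono_le {m : ℕ} {f : Fin m → ℕ} (hf : StrictMono f) :
    ∀ k, ∀ hk : k < m, k ≤ f ⟨k, hk⟩ := by
  intro k
  induction k with
  | zero => intro _; exact Nat.zero_le _
  | succ k ih =>
    intro hk
    have hk' : k < m := Nat.lt_of_succ_lt hk
    have h1 := ih hk'
    have h2 : f ⟨k, hk'⟩ < f ⟨k + 1, hk⟩ := hf (by simp [Fin.lt_def])
    omega

private lemma disp_sum_lb (B : Finset ℕ) : ∑ i ∈ Finset.range B.card, i ≤ ∑ i ∈ B, i := by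
  have he : Finset.image (B.orderEmbOfFin rfl) Finset.univ = B := by
    apply Finset.coe_injective
    rw [Finset.coe_image, Finset.coe_univ, Set.image_univ, Finset.range_orderEmbOfFin]
  have hinj : Function.Injective (B.orderEmbOfFin rfl) := (B.orderEmbOfFin rfl).injective
  have h1 : ∑ i ∈ B, i = ∑ i : Fin B.card, B.orderEmbOfFin rfl i := by
    conv_lhs => rw [← he]
    rw [Finset.sum_image (fun x _ y _ h => hinj h)]
  rw [h1, ← Fin.sum_univ_eq_sum_range (fun i => i) B.card]
  exact Finset.sum_le_sum fun i _ =>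
    disp_strictMono_le (B.orderEmbOfFin rfl).strictMono i.val i.isLt

private lemma disp_sum_ub (n : ℕ) (B : Finset ℕ) (hB : B ⊆ Finset.range n) :
    ∑ i ∈ B, i + ∑ i ∈ Finset.range (n - B.card), i ≤ ∑ i ∈ Finset.range n, i := by
  have hcard : (Finset.range n \ B).card = n - B.card := by
    rw [Finset.card_sdiff_of_subset hB, Finset.card_range]
  have hsd : ∑ i ∈ Finset.range n \ B, i + ∑ i ∈ B, i = ∑ i ∈ Finset.range n, i :=
    Finset.sum_sdiff hB
  have := disp_sum_lb (Finset.range n \ B)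
  rw [hcard] at this
  omega

private lemma disp_odd_card_even (n : ℕ) (a : ℕ → ℤ) (hsum0 : ∑ i ∈ Finset.range n, a i = 0) :
    Even (((Finset.range n).filter (fun i => Odd (a i))).card) := by
  have htwo : (2 : ZMod 2) = 0 := by decide
  have hz : ∑ i ∈ Finset.range n, ((a i : ZMod 2)) = 0 := by
    rw [← Int.cast_sum, hsum0, Int.cast_zero]
  have hsplit := Finset.sum_filter_add_sum_filter_not (Finset.range n)
    (fun i => Odd (a i)) (fun i => ((a i : ZMod 2)))
  have h1 : ∑ i ∈ (Finset.range n).filter (fun i => Odd (a i)), ((a i : ZMod 2))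
      = (((Finset.range n).filter (fun i => Odd (a i))).card : ZMod 2) := by
    rw [Finset.sum_congr rfl (fun i hi => ?_), Finset.sum_const, nsmul_eq_mul, mul_one]
    obtain ⟨k, hk⟩ := (Finset.mem_filter.mp hi).2
    rw [hk]; push_cast; rw [htwo]; ring
  have h2 : ∑ i ∈ (Finset.range n).filter (fun i => ¬ Odd (a i)), ((a i : ZMod 2)) = 0 := by
    refine Finset.sum_eq_zero fun i hi => ?_
    have h3 := (Finset.mem_filter.mp hi).2
    rw [Int.not_odd_iff_even] at h3
    obtain ⟨k, hk⟩ := h3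
    rw [hk]; push_cast; ring_nf; rw [htwo]; ring
  rw [h1, h2, add_zero, hz] at hsplit
  have := (ZMod.natCast_eq_zero_iff
    (((Finset.range n).filter (fun i => Odd (a i))).card) 2).mp hsplit
  exact (even_iff_two_dvd).mpr this

/-- Monotone tuples with the same value multiset are equal. -/
private lemma disp_mono_eq {n : ℕ} {g h : Fin n → ℤ} (hg : Monotone g) (hh : Monotone h)
    (he : Multiset.map g Finset.univ.val = Multiset.map h Finset.univ.val) : g = h := by
  have hg' : (List.ofFn g).Pairwise (· ≤ ·) := (List.sortedLE_ofFn_iff.mpr hg).pairwise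
  have hh' : (List.ofFn h).Pairwise (· ≤ ·) := (List.sortedLE_ofFn_iff.mpr hh).pairwise
  have hq : (↑(List.ofFn g) : Multiset ℤ) = ↑(List.ofFn h) := by
    have e1 : Multiset.map g Finset.univ.val = ↑(List.ofFn g) := by
      simp [Finset.univ, Fintype.elems, Fin.fintype, List.ofFn_eq_map]
    have e2 : Multiset.map h Finset.univ.val = ↑(List.ofFn h) := by
      simp [Finset.univ, Fintype.elems, Fin.fintype, List.ofFn_eq_map]
    rw [← e1, ← e2, he]
  exact List.ofFn_injective (List.Perm.eq_of_pairwise' hg' hh' (Quotient.exact hq))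

private lemma disp_univ_val_map (n : ℕ) :
    (Finset.univ.val : Multiset (Fin n)).map Fin.val = (Finset.range n).val := by
  simp [Finset.univ, Fintype.elems, Fin.fintype, Multiset.range, List.ofFn_eq_map]

private lemma disp_perm_map (n : ℕ) (e : Equiv.Perm (Fin n)) :
    (Finset.univ.val : Multiset (Fin n)).map e = Finset.univ.val := by
  have := congrArg Finset.val (Finset.map_univ_equiv e)
  simp only [Finset.map_val] at this; exact this

/-- if a permutation `π` of `{1,...,n}` has displacement multiset equal to the
decreasingly sorted pattern `a 0 ≥ a 1 ≥ ... ≥ a (n-1)`, then (1) for each `1 ≤ m ≤ n`,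
`a 0 + ... + a (m-1) ≤ m (n - m)`, with equality (sum `0`) when `m = n`; and (2) if `n` is
even, the number of even entries is even, while if `n` is odd, the number of odd entries is
even. -/
theorem displacement_pattern_necessary (n : ℕ) (a : ℕ → ℤ)
    (ha : ∀ i j, i ≤ j → j < n → a j ≤ a i)
    (π : Equiv.Perm (Fin n))
    (hdisp : Multiset.map (fun i : Fin n => ((π i).val : ℤ) - (i.val : ℤ)) Finset.univ.val
      = (Finset.range n).val.map a) :
    (∀ m, 1 ≤ m → m ≤ n →
        ∑ i ∈ Finset.range m, a i ≤ ((m * (n - m) : ℕ) : ℤ)) ∧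
    (∑ i ∈ Finset.range n, a i = 0) ∧
    (Even n → Even (((Finset.range n).filter (fun i => Even (a i))).card)) ∧
    (Odd n → Even (((Finset.range n).filter (fun i => Odd (a i))).card)) := by
  set d : Fin n → ℤ := fun i => ((π i).val : ℤ) - (i.val : ℤ) with hd
  -- total sum is zero
  have hsum0 : ∑ i ∈ Finset.range n, a i = 0 := by
    have h1 : (Multiset.map d Finset.univ.val).sum = ((Finset.range n).val.map a).sum := by
      rw [hdisp]
    have h2 : (Multiset.map d Finset.univ.val).sum = ∑ i : Fin n, d i := rfl
    have h3 : ((Finset.range n).val.map a).sum = ∑ i ∈ Finset.range n, a i := rfl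
    have h4 : ∑ i : Fin n, d i = 0 := by
      simp only [hd, Finset.sum_sub_distrib]
      rw [Equiv.sum_comp π (fun i : Fin n => (i.val : ℤ))]
      ring
    rw [← h3, ← h1, h2, h4]
  -- the reindexing bijection
  have hdisp' : Multiset.map d Finset.univ.val
      = Multiset.map (fun i : Fin n => a i.val) Finset.univ.val := by
    rw [hdisp, ← disp_univ_val_map n, Multiset.map_map]
    rfl
  have key : ∃ e : Fin n → Fin n, Function.Injective e ∧ ∀ j : Fin n, a j.val = d (e j) := by
    set σ := Tuple.sort d with hσ
    have hg : Monotone (d ∘ σ) := Tuple.monotone_sort d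
    have hh : Monotone (fun i : Fin n => a (Fin.rev i).val) := by
      intro i j hij
      exact ha (Fin.rev j).val (Fin.rev i).val (Fin.rev_le_rev.mpr hij) (Fin.rev i).isLt
    have hgh : Multiset.map (d ∘ σ) Finset.univ.val
        = Multiset.map (fun i : Fin n => a (Fin.rev i).val) Finset.univ.val := by
      have e1 : Multiset.map (d ∘ σ) Finset.univ.val = Multiset.map d Finset.univ.val := by
        conv_rhs => rw [← disp_perm_map n σ]
        rw [Multiset.map_map]
      have e2 : Multiset.map (fun i : Fin n => a (Fin.rev i).val) Finset.univ.val
          = Multiset.map (fun i : Fin n => a i.val) Finset.univ.val := by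
        conv_rhs => rw [← disp_perm_map n Fin.revPerm]
        rw [Multiset.map_map]
        rfl
      rw [e1, e2, hdisp']
    have heq := disp_mono_eq hg hh hgh
    refine ⟨fun j => σ (Fin.rev j), fun x y hxy => ?_, fun j => ?_⟩
    · exact Fin.rev_injective (σ.injective hxy)
    · have := congrFun heq (Fin.rev j)
      simp only [Function.comp_apply, Fin.rev_rev] at this
      exact this.symm
  obtain ⟨e, he_inj, he⟩ := key
  refine ⟨?_, hsum0, ?_, fun _ => disp_odd_card_even n a hsum0⟩
  · -- partial sum bound
    intro m hm1 hmn
    set F : Fin m → Fin n := fun j => e (Fin.castLE hmn j) with hF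
    have hF_inj : Function.Injective F := fun x y hxy =>
      Fin.castLE_injective hmn (he_inj hxy)
    set S : Finset (Fin n) := Finset.image F Finset.univ with hS
    have hScard : S.card = m := by
      rw [hS, Finset.card_image_of_injective _ hF_inj, Finset.card_univ, Fintype.card_fin]
    have hsum_eq : ∑ i ∈ Finset.range m, a i = ∑ i ∈ S, d i := by
      rw [hS, Finset.sum_image (fun x _ y _ h => hF_inj h)]
      rw [← Fin.sum_univ_eq_sum_range a m]
      refine Finset.sum_congr rfl fun j _ => ?_
      have := he (Fin.castLE hmn j)
      simpa using this
    rw [hsum_eq]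
    have hsplit : ∑ i ∈ S, d i
        = (∑ i ∈ S, ((π i).val : ℤ)) - ∑ i ∈ S, ((i.val : ℕ) : ℤ) := by
      simp only [hd, Finset.sum_sub_distrib]
    set B : Finset ℕ := S.image (fun i => (π i).val) with hB
    set C : Finset ℕ := S.image Fin.val with hC
    have hB_inj : ∀ x ∈ S, ∀ y ∈ S, (π x).val = (π y).val → x = y := by
      intro x _ y _ h
      exact π.injective (Fin.val_injective h)
    have hC_inj : ∀ x ∈ S, ∀ y ∈ S, x.val = y.val → x = y := by
      intro x _ y _ h; exact Fin.val_injective h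
    have hBcard : B.card = m := by
      rw [hB, Finset.card_image_of_injOn (fun x hx y hy h => hB_inj x hx y hy h), hScard]
    have hCcard : C.card = m := by
      rw [hC, Finset.card_image_of_injOn (fun x hx y hy h => hC_inj x hx y hy h), hScard]
    have hBsub : B ⊆ Finset.range n := by
      intro b hb
      rw [hB, Finset.mem_image] at hb
      obtain ⟨i, _, rfl⟩ := hb
      exact Finset.mem_range.mpr (π i).isLt
    have hBsum : ∑ i ∈ S, ((π i).val : ℤ) = ((∑ b ∈ B, b : ℕ) : ℤ) := by
      push_cast
      rw [hB, Finset.sum_image hB_inj]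
    have hCsum : ∑ i ∈ S, ((i.val : ℕ) : ℤ) = ((∑ c ∈ C, c : ℕ) : ℤ) := by
      push_cast
      rw [hC, Finset.sum_image hC_inj]
    -- bounds on B and C sums
    have hub := disp_sum_ub n B hBsub
    rw [hBcard] at hub
    have hlb := disp_sum_lb C
    rw [hCcard] at hlb
    have hub' : ((∑ b ∈ B, b : ℕ) : ℤ) + ((∑ i ∈ Finset.range (n - m), i : ℕ) : ℤ)
        ≤ ((∑ i ∈ Finset.range n, i : ℕ) : ℤ) := by exact_mod_cast hub
    have hlb' : ((∑ i ∈ Finset.range m, i : ℕ) : ℤ) ≤ ((∑ c ∈ C, c : ℕ) : ℤ) := by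
      exact_mod_cast hlb
    -- Gauss sums, with casts of ℕ-sums
    have hcastsum : ∀ t : ℕ, ((∑ i ∈ Finset.range t, i : ℕ) : ℤ)
        = ∑ i ∈ Finset.range t, (i : ℤ) := by
      intro t; push_cast; rfl
    have hk : (n : ℤ) = (m : ℤ) + ((n - m : ℕ) : ℤ) := by
      push_cast [Nat.cast_sub hmn]; ring
    have hGn := disp_gauss n
    rw [hk] at hGn
    have hGm := disp_gauss m
    have hGk := disp_gauss (n - m)
    have hmain : ((∑ i ∈ Finset.range n, i : ℕ) : ℤ)
        - ((∑ i ∈ Finset.range (n - m), i : ℕ) : ℤ)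
        - ((∑ i ∈ Finset.range m, i : ℕ) : ℤ) = ((m * (n - m) : ℕ) : ℤ) := by
      rw [hcastsum, hcastsum, hcastsum]
      push_cast
      linarith [hGn, hGm, hGk, sq_nonneg ((m:ℤ) + ((n-m:ℕ):ℤ)),
        mul_self_nonneg ((m:ℤ) - ((n-m:ℕ):ℤ))]
    rw [hsplit, hBsum, hCsum]
    linarith [hub', hlb', hmain]
  · -- even case
    intro hne
    have hodd := disp_odd_card_even n a hsum0
    have hcards := Finset.card_filter_add_card_filter_not
      (s := Finset.range n) (p := fun i => Even (a i))
    simp only [Int.not_even_iff_odd] at hcards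
    rw [Finset.card_range] at hcards
    rw [Nat.even_iff] at hne hodd ⊢
    omega
end

section
/- A multiset A = {a_1, ..., a_n} of positive integers is a perfect extremal multi Skolem set if and only if the multiset {2n - a_n, 2n - a_{n-1}, ..., 2n - a_1} is a perfect extremal multi Skolem set. -/
/-- A multiset `{a i}` of `n` positive integers is a perfect extremal multi Skolem set:
`{1,...,2n}` partitions into `n` pairs with differences `a i`, and `∑ a i = n^2`. -/
def IsPerfectExtremalMultiSkolem (n : ℕ) (a : Fin n → ℕ) : Prop :=
  (∃ s t : Fin n → ℕ, (∀ i, t i < s i ∧ s i - t i = a i) ∧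
      Multiset.map s Finset.univ.val + Multiset.map t Finset.univ.val
        = (Finset.Icc 1 (2 * n)).val) ∧
  ∑ i, a i = n ^ 2

lemma skolem_gauss (m : ℕ) : 2 * ∑ x ∈ Finset.Icc 1 m, x = m * (m + 1) := by
  induction m with
  | zero => simp
  | succ k ih =>
    rw [Finset.sum_Icc_succ_top (by omega)]
    ring_nf
    ring_nf at ih
    omega

lemma skolem_val_sum (s : Finset ℕ) : s.val.sum = ∑ x ∈ s, x := by
  rw [← Finset.sum_map_val s (fun x => x), Multiset.map_id']

lemma skolem_key (n : ℕ) (a : Fin n → ℕ) (h : IsPerfectExtremalMultiSkolem n a) :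
    IsPerfectExtremalMultiSkolem n (fun i => 2 * n - a i) := by
  obtain ⟨⟨s, t, hst, hpart⟩, hsum⟩ := h
  rcases Nat.eq_zero_or_pos n with hn | hn
  · subst hn
    refine ⟨⟨s, t, fun i => i.elim0, ?_⟩, ?_⟩ <;> simp
  set S : Multiset ℕ := Multiset.map s Finset.univ.val with hS
  set T : Multiset ℕ := Multiset.map t Finset.univ.val with hT
  have cardT : Multiset.card T = n := by simp [hT]
  have cardS : Multiset.card S = n := by simp [hS]
  have hTle : T ≤ (Finset.Icc 1 (2 * n)).val := by
    rw [← hpart]; exact Multiset.le_add_left _ _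
  have hSle : S ≤ (Finset.Icc 1 (2 * n)).val := by
    rw [← hpart]; exact Multiset.le_add_right _ _
  -- sums
  have hTsum : T.sum = ∑ i, t i := rfl
  have hSsum : S.sum = ∑ i, s i := rfl
  have htot : S.sum + T.sum = (Finset.Icc 1 (2 * n)).val.sum := by
    have := congrArg Multiset.sum hpart
    rw [Multiset.sum_add] at this
    exact this
  have hSsum' : S.sum = T.sum + n ^ 2 := by
    rw [hSsum, hTsum, ← hsum, ← Finset.sum_add_distrib]
    refine Finset.sum_congr rfl fun i _ => ?_
    have := hst i; omega
  have htot2 : 2 * (S.sum + T.sum) = 2 * n * (2 * n + 1) := by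
    rw [htot, skolem_val_sum, skolem_gauss]
  have hTn : 2 * T.sum = n * (n + 1) := by nlinarith [htot2, hSsum']
  -- split T into small and large parts
  set T1 := T.filter (fun x => x ≤ n) with hT1
  set T2 := T.filter (fun x => ¬ x ≤ n) with hT2
  have hTsplit : T1 + T2 = T := Multiset.filter_add_not _ _
  set m := Multiset.card T2 with hm
  have hfiltIcc : (Finset.Icc 1 (2 * n)).filter (fun x => x ≤ n) = Finset.Icc 1 n := by
    ext x; simp [Finset.mem_Icc, Finset.mem_filter]; omega
  have hT1le : T1 ≤ (Finset.Icc 1 n).val := by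
    have h1 : T1 ≤ (Finset.Icc 1 (2 * n)).val.filter (fun x => x ≤ n) :=
      Multiset.filter_le_filter _ hTle
    rwa [← Finset.filter_val, hfiltIcc] at h1
  set M := (Finset.Icc 1 n).val - T1 with hMdef
  have hMadd : T1 + M = (Finset.Icc 1 n).val := add_tsub_cancel_of_le hT1le
  have cardIcc1n : Multiset.card (Finset.Icc 1 n).val = n := by
    simp [Nat.card_Icc]
  have hcard1 : Multiset.card T1 + m = n := by
    have := congrArg Multiset.card hTsplit
    rw [Multiset.card_add] at this; omega
  have hcardM : Multiset.card M = m := by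
    have := congrArg Multiset.card hMadd
    rw [Multiset.card_add] at this; omega
  have hT2sum : m * (n + 1) ≤ T2.sum := by
    have := Multiset.card_nsmul_le_sum (s := T2) (a := n + 1)
      (fun x hx => by have := Multiset.of_mem_filter hx; omega)
    simpa [smul_eq_mul] using this
  have hMsum : M.sum ≤ m * n := by
    have hMle : M ≤ (Finset.Icc 1 n).val := tsub_le_self
    have := Multiset.sum_le_card_nsmul M n
      (fun x hx => (Finset.mem_Icc.mp (Multiset.mem_toFinset.mp
        (by simpa using Multiset.mem_of_le hMle hx))).2)
    simpa [smul_eq_mul, hcardM] using this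
  have hIcc1nsum : 2 * ((Finset.Icc 1 n).val.sum) = n * (n + 1) := by
    rw [skolem_val_sum, skolem_gauss]
  have hsum1 : T1.sum + T2.sum = T.sum := by
    rw [← hTsplit, Multiset.sum_add]
  have hsum2 : T1.sum + M.sum = (Finset.Icc 1 n).val.sum := by
    rw [← hMadd, Multiset.sum_add]
  -- conclude m = 0
  have hT2M : T2.sum = M.sum := by
    have h1 : 2 * (T1.sum + M.sum) = n * (n + 1) := by rw [hsum2]; exact hIcc1nsum
    have h2 : 2 * (T1.sum + T2.sum) = n * (n + 1) := by rw [hsum1]; exact hTn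
    omega
  have hm0 : m = 0 := by
    have hle : m * (n + 1) ≤ m * n := le_trans hT2sum (hT2M ▸ hMsum)
    by_contra hne
    have hlt : m * n < m * (n + 1) :=
      mul_lt_mul_of_pos_left (Nat.lt_succ_self n) (Nat.pos_of_ne_zero hne)
    exact absurd hle (not_le.mpr hlt)
  -- hence T = Icc 1 n
  have hT2nil : T2 = 0 := Multiset.card_eq_zero.mp (hm0 ▸ rfl)
  have hTeq : T = (Finset.Icc 1 n).val := by
    have hle : T ≤ (Finset.Icc 1 n).val := by
      rw [← hTsplit, hT2nil, add_zero]; exact hT1le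
    exact Multiset.eq_of_le_of_card_le hle (by omega)
  -- Icc split
  have hsplitIcc : (Finset.Icc 1 n).val + (Finset.Icc (n + 1) (2 * n)).val
      = (Finset.Icc 1 (2 * n)).val := by
    have hdisj : Disjoint (Finset.Icc 1 n) (Finset.Icc (n + 1) (2 * n)) := by
      simp only [Finset.disjoint_left, Finset.mem_Icc]
      intro x hx hx2; omega
    have hun : (Finset.Icc 1 n).disjUnion (Finset.Icc (n + 1) (2 * n)) hdisj
        = Finset.Icc 1 (2 * n) := by
      rw [Finset.disjUnion_eq_union]
      ext x; simp [Finset.mem_Icc, Finset.mem_union]; omega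
    have hval : (Finset.Icc 1 n).val + (Finset.Icc (n + 1) (2 * n)).val
        = ((Finset.Icc 1 n).disjUnion (Finset.Icc (n + 1) (2 * n)) hdisj).val := rfl
    rw [hval, hun]
  have hSeq : S = (Finset.Icc (n + 1) (2 * n)).val := by
    have : S + T = (Finset.Icc (n + 1) (2 * n)).val + T := by
      rw [hpart, hTeq, add_comm, hsplitIcc]
    exact add_right_cancel this
  -- membership bounds
  have hsb : ∀ i, n + 1 ≤ s i ∧ s i ≤ 2 * n := by
    intro i
    have : s i ∈ S := Multiset.mem_map_of_mem s (Finset.mem_univ i)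
    rw [hSeq] at this
    exact Finset.mem_Icc.mp this
  have htb : ∀ i, 1 ≤ t i ∧ t i ≤ n := by
    intro i
    have : t i ∈ T := Multiset.mem_map_of_mem t (Finset.mem_univ i)
    rw [hTeq] at this
    exact Finset.mem_Icc.mp this
  have hmap : ((Finset.Icc 1 n).val.map fun x => x + n)
      = (Finset.Icc (n + 1) (2 * n)).val := by
    have h0 := Multiset.map_add_right_Icc (α := ℕ) 1 n n
    rw [show (1 : ℕ) + n = n + 1 by omega, show n + n = 2 * n by omega] at h0
    exact h0
  refine ⟨⟨fun i => t i + n, fun i => s i - n, ?_, ?_⟩, ?_⟩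
  · intro i
    have h1 := hst i; have h2 := hsb i; have h3 := htb i
    dsimp only
    omega
  · have e1 : Multiset.map (fun i => t i + n) Finset.univ.val
        = (Finset.Icc (n + 1) (2 * n)).val := by
      have : Multiset.map (fun i => t i + n) Finset.univ.val
          = Multiset.map (fun x => x + n) T := by
        rw [hT, Multiset.map_map]; rfl
      rw [this, hTeq, hmap]
    have e2 : Multiset.map (fun i => s i - n) Finset.univ.val
        = (Finset.Icc 1 n).val := by
      have h1 : Multiset.map (fun i => s i - n) Finset.univ.val
          = Multiset.map (fun x => x - n) S := by
        rw [hS, Multiset.map_map]; rfl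
      rw [h1, hSeq, ← hmap, Multiset.map_map]
      have h2 : ((fun x => x - n) ∘ fun x => x + n) = fun x : ℕ => x := by
        funext x; simp
      rw [h2, Multiset.map_id']
    rw [e1, e2, add_comm, hsplitIcc]
  · have ha : ∀ i, a i ≤ 2 * n := by
      intro i
      have h1 := hst i; have h2 := hsb i; have h3 := htb i
      omega
    have h1 : ∑ i, ((2 * n - a i) + a i) = ∑ i : Fin n, 2 * n :=
      Finset.sum_congr rfl fun i _ => by have := ha i; omega
    rw [Finset.sum_add_distrib, hsum, Finset.sum_const, Finset.card_univ,
      Fintype.card_fin, smul_eq_mul] at h1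
    have hr : n * (2 * n) = n ^ 2 + n ^ 2 := by ring
    rw [hr] at h1
    exact Nat.add_right_cancel h1

/-- `A = {a_1, ..., a_n}` is a perfect extremal multi Skolem set iff
`{2n - a_n, ..., 2n - a_1}` is a perfect extremal multi Skolem set. -/
theorem extremal_skolem_complement (n : ℕ) (a : Fin n → ℕ) :
    IsPerfectExtremalMultiSkolem n a ↔
      IsPerfectExtremalMultiSkolem n (fun i => 2 * n - a i) := by
  constructor
  · exact skolem_key n a
  · intro h
    have h2 := skolem_key n _ h
    have ha : ∀ i, a i < 2 * n := by
      obtain ⟨⟨s, t, hst, -⟩, -⟩ := h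
      intro i
      have h3 := hst i
      dsimp only at h3
      omega
    convert h2 using 2 with i
    have := ha i
    omega
end

section
/- If A = {a_1, ..., a_n} is a perfect multi Skolem set, then B = {2n + a_1, ..., 2n + a_n, 2n - a_1, ..., 2n - a_n} is a perfect extremal multi Skolem set of order 2n. -/
lemma Icc_split (m k : ℕ) :
    Multiset.Icc 1 m + Multiset.Icc (1 + m) (m + k) = Multiset.Icc 1 (m + k) := by
  have h1 : (Multiset.Icc 1 m).Nodup := Finset.nodup _
  have h2 : (Multiset.Icc (1 + m) (m + k)).Nodup := Finset.nodup _
  have h3 : (Multiset.Icc 1 (m + k)).Nodup := Finset.nodup _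
  have hd : Disjoint (Multiset.Icc 1 m) (Multiset.Icc (1 + m) (m + k)) := by
    rw [Multiset.disjoint_left]
    intro x hx hx'
    rw [Multiset.mem_Icc] at hx hx'
    omega
  have hn : (Multiset.Icc 1 m + Multiset.Icc (1 + m) (m + k)).Nodup := by
    rw [Multiset.nodup_add]; exact ⟨h1, h2, hd⟩
  refine (hn.ext h3).2 ?_
  intro x
  simp only [Multiset.mem_add, Multiset.mem_Icc]
  omega

/-- if `A = {a_1, ..., a_n}` is a perfect multi Skolem set (i.e. `{1,...,2n}`
partitions into pairs with differences `a i`), then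
`B = {2n + a_1, ..., 2n + a_n, 2n - a_1, ..., 2n - a_n}` is a perfect extremal multi Skolem
set of order `2n`: `{1,...,4n}` partitions into `2n` pairs with the differences in `B`, and
the elements of `B` sum to `(2n)^2`. -/
theorem extremal_from_skolem (n : ℕ) (a : Fin n → ℕ)
    (hpos : ∀ i, 0 < a i)
    (hA : ∃ s t : Fin n → ℕ, (∀ i, t i < s i ∧ s i - t i = a i) ∧
        Multiset.map s Finset.univ.val + Multiset.map t Finset.univ.val
          = (Finset.Icc 1 (2 * n)).val) :
    (∃ s t : Fin n ⊕ Fin n → ℕ,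
        (∀ i, t i < s i ∧
          s i - t i = Sum.elim (fun j : Fin n => 2 * n + a j) (fun j : Fin n => 2 * n - a j) i) ∧
        Multiset.map s Finset.univ.val + Multiset.map t Finset.univ.val
          = (Finset.Icc 1 (4 * n)).val) ∧
    (∑ i : Fin n ⊕ Fin n,
        Sum.elim (fun j : Fin n => 2 * n + a j) (fun j : Fin n => 2 * n - a j) i)
      = (2 * n) ^ 2 := by
  obtain ⟨s, t, hst, hsum⟩ := hA
  have hs2n : ∀ i, s i ≤ 2 * n := by
    intro i
    have hmem : s i ∈ Multiset.map s Finset.univ.val :=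
      Multiset.mem_map.2 ⟨i, Finset.mem_univ i, rfl⟩
    have : s i ∈ (Finset.Icc 1 (2 * n)).val := by
      rw [← hsum]; exact Multiset.mem_add.2 (Or.inl hmem)
    exact (Finset.mem_Icc.1 this).2
  have ht1 : ∀ i, 1 ≤ t i := by
    intro i
    have hmem : t i ∈ Multiset.map t Finset.univ.val :=
      Multiset.mem_map.2 ⟨i, Finset.mem_univ i, rfl⟩
    have : t i ∈ (Finset.Icc 1 (2 * n)).val := by
      rw [← hsum]; exact Multiset.mem_add.2 (Or.inr hmem)
    exact (Finset.mem_Icc.1 this).1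
  have ha2n : ∀ i, a i ≤ 2 * n := by
    intro i
    have h1 := (hst i).1; have h2 := (hst i).2; have h3 := hs2n i; omega
  have key : ∀ f g : Fin n → ℕ,
      Multiset.map (Sum.elim f g) (Finset.univ : Finset (Fin n ⊕ Fin n)).val
        = Multiset.map f Finset.univ.val + Multiset.map g Finset.univ.val := by
    intro f g
    rw [← Finset.univ_disjSum_univ, Finset.val_disjSum, Multiset.disjSum,
      Multiset.map_add, Multiset.map_map, Multiset.map_map]
    rfl
  constructor
  · refine ⟨Sum.elim (fun j => s j + 2 * n) (fun j => t j + 2 * n), Sum.elim t s, ?_, ?_⟩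
    · rintro (j | j) <;> simp only [Sum.elim_inl, Sum.elim_inr] <;>
        · have h1 := (hst j).1; have h2 := (hst j).2; have h3 := hs2n j
          have h4 := ht1 j; omega
    · rw [key, key]
      have hs' : Multiset.map (fun j => s j + 2 * n) Finset.univ.val
          = Multiset.map (· + 2 * n) (Multiset.map s Finset.univ.val) := by
        rw [Multiset.map_map]; rfl
      have ht' : Multiset.map (fun j => t j + 2 * n) Finset.univ.val
          = Multiset.map (· + 2 * n) (Multiset.map t Finset.univ.val) := by
        rw [Multiset.map_map]; rfl
      calc Multiset.map (fun j => s j + 2 * n) Finset.univ.val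
            + Multiset.map (fun j => t j + 2 * n) Finset.univ.val
          + (Multiset.map t Finset.univ.val + Multiset.map s Finset.univ.val)
          = (Multiset.map s Finset.univ.val + Multiset.map t Finset.univ.val)
            + Multiset.map (· + 2 * n)
              (Multiset.map s Finset.univ.val + Multiset.map t Finset.univ.val) := by
            rw [hs', ht', Multiset.map_add]; abel
        _ = Multiset.Icc 1 (2 * n) + Multiset.map (· + 2 * n) (Multiset.Icc 1 (2 * n)) := by
            rw [hsum]; rfl
        _ = Multiset.Icc 1 (2 * n) + Multiset.Icc (1 + 2 * n) (2 * n + 2 * n) := by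
            rw [show ((· + 2 * n) : ℕ → ℕ) = fun x => x + 2 * n from rfl,
              Multiset.map_add_right_Icc]
        _ = (Finset.Icc 1 (4 * n)).val := by
            rw [show 4 * n = 2 * n + 2 * n by ring, Icc_split]
            rfl
  · rw [Fintype.sum_sum_type]
    simp only [Sum.elim_inl, Sum.elim_inr]
    rw [← Finset.sum_add_distrib]
    have : ∀ j : Fin n, 2 * n + a j + (2 * n - a j) = 4 * n := by
      intro j; have := ha2n j; omega
    simp_rw [this]
    rw [Finset.sum_const, Finset.card_univ, Fintype.card_fin]
    ring
end

section
/- If A = {a_1, ..., a_n} is a k-extended multi Skolem set for some k with 1 ≤ k ≤ 2n+1, then B = {2n+1 + a_1, ..., 2n+1 + a_n, 2n+1, 2n+1 - a_1, ..., 2n+1 - a_n} is a perfect extremal multi Skolem set of order 2n+1. -/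
/-- if `A = {a_1, ..., a_n}` is a `k`-extended multi Skolem set for some
`1 ≤ k ≤ 2n+1` (i.e. `{1,...,2n+1} \ {k}` partitions into pairs with differences `a i`),
then `B = {2n+1 + a_1, ..., 2n+1 + a_n, 2n+1, 2n+1 - a_1, ..., 2n+1 - a_n}` is a perfect
extremal multi Skolem set of order `2n+1`: `{1,...,4n+2}` partitions into pairs with the
differences in `B`, and the elements of `B` sum to `(2n+1)^2`. -/
theorem extremal_from_k_extended_skolem (n k : ℕ) (a : Fin n → ℕ)
    (hpos : ∀ i, 0 < a i) (hk1 : 1 ≤ k) (hk2 : k ≤ 2 * n + 1)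
    (hA : ∃ s t : Fin n → ℕ, (∀ i, t i < s i ∧ s i - t i = a i) ∧
        Multiset.map s Finset.univ.val + Multiset.map t Finset.univ.val
          = ((Finset.Icc 1 (2 * n + 1)).erase k).val) :
    (∃ s t : (Fin n ⊕ Unit) ⊕ Fin n → ℕ,
        (∀ i, t i < s i ∧
          s i - t i = Sum.elim
            (Sum.elim (fun j : Fin n => 2 * n + 1 + a j) (fun _ : Unit => 2 * n + 1))
            (fun j : Fin n => 2 * n + 1 - a j) i) ∧
        Multiset.map s Finset.univ.val + Multiset.map t Finset.univ.val
          = (Finset.Icc 1 (4 * n + 2)).val) ∧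
    (∑ i : (Fin n ⊕ Unit) ⊕ Fin n,
        Sum.elim
          (Sum.elim (fun j : Fin n => 2 * n + 1 + a j) (fun _ : Unit => 2 * n + 1))
          (fun j : Fin n => 2 * n + 1 - a j) i)
      = (2 * n + 1) ^ 2 := by
  obtain ⟨s, t, hst, hcov⟩ := hA
  -- bounds on s and t
  have hsmem : ∀ i, s i ∈ Finset.Icc 1 (2 * n + 1) := by
    intro i
    have h1 : s i ∈ Multiset.map s Finset.univ.val + Multiset.map t Finset.univ.val := by
      refine Multiset.mem_add.2 (Or.inl ?_)
      exact Multiset.mem_map_of_mem s (Finset.mem_univ i)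
    rw [hcov] at h1
    exact Finset.mem_of_mem_erase h1
  have htmem : ∀ i, t i ∈ Finset.Icc 1 (2 * n + 1) := by
    intro i
    have h1 : t i ∈ Multiset.map s Finset.univ.val + Multiset.map t Finset.univ.val := by
      refine Multiset.mem_add.2 (Or.inr ?_)
      exact Multiset.mem_map_of_mem t (Finset.mem_univ i)
    rw [hcov] at h1
    exact Finset.mem_of_mem_erase h1
  have hbounds : ∀ i, 1 ≤ t i ∧ t i < s i ∧ s i ≤ 2 * n + 1 ∧ s i - t i = a i := by
    intro i
    have h1 := Finset.mem_Icc.1 (hsmem i)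
    have h2 := Finset.mem_Icc.1 (htmem i)
    exact ⟨h2.1, (hst i).1, h1.2, (hst i).2⟩
  have ha_le : ∀ i, a i ≤ 2 * n := by
    intro i
    have := hbounds i
    omega
  constructor
  · refine ⟨Sum.elim (Sum.elim (fun j => s j + (2 * n + 1)) (fun _ => k + (2 * n + 1)))
        (fun j => t j + (2 * n + 1)),
      Sum.elim (Sum.elim t (fun _ => k)) s, ?_, ?_⟩
    · rintro ((i | u) | i)
      · have := hbounds i; simp only [Sum.elim_inl]; omega
      · simp only [Sum.elim_inl, Sum.elim_inr]; omega
      · have := hbounds i; have := ha_le i; simp only [Sum.elim_inr]; omega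
    · -- the covering identity
      have key : Multiset.map s Finset.univ.val + Multiset.map t Finset.univ.val + {k}
          = (Finset.Icc 1 (2 * n + 1)).val := by
        rw [hcov, Finset.erase_val]
        have hkmem : k ∈ (Finset.Icc 1 (2 * n + 1)).val :=
          Finset.mem_Icc.2 ⟨hk1, hk2⟩
        rw [add_comm, Multiset.singleton_add, Multiset.cons_erase hkmem]
      have keysh : Multiset.map (fun j => s j + (2 * n + 1)) Finset.univ.val
            + Multiset.map (fun j => t j + (2 * n + 1)) Finset.univ.val + {k + (2 * n + 1)}
          = (Finset.Icc (2 * n + 2) (4 * n + 2)).val := by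
        have h2 : (Finset.Icc 1 (2 * n + 1)).map (addRightEmbedding (2 * n + 1))
            = Finset.Icc (2 * n + 2) (4 * n + 2) := by
          rw [Finset.map_add_right_Icc]
          congr 1 <;> omega
        calc Multiset.map (fun j => s j + (2 * n + 1)) Finset.univ.val
            + Multiset.map (fun j => t j + (2 * n + 1)) Finset.univ.val + {k + (2 * n + 1)}
            = Multiset.map (fun x => x + (2 * n + 1))
              (Multiset.map s Finset.univ.val + Multiset.map t Finset.univ.val + {k}) := by
              rw [Multiset.map_add, Multiset.map_add, Multiset.map_map, Multiset.map_map,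
                Multiset.map_singleton]
              rfl
          _ = Multiset.map (fun x => x + (2 * n + 1)) (Finset.Icc 1 (2 * n + 1)).val := by
              rw [key]
          _ = (Finset.Icc (2 * n + 2) (4 * n + 2)).val := by
              rw [← h2, Finset.map_val]
              rfl
      have hsplit : (Finset.Icc 1 (4 * n + 2)).val
          = (Finset.Icc 1 (2 * n + 1)).val + (Finset.Icc (2 * n + 2) (4 * n + 2)).val := by
        have hdisj : Disjoint (Finset.Icc 1 (2 * n + 1)) (Finset.Icc (2 * n + 2) (4 * n + 2)) := by
          rw [Finset.disjoint_left]
          intro x hx hx'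
          have := Finset.mem_Icc.1 hx
          have := Finset.mem_Icc.1 hx'
          omega
        have hun : Finset.Icc 1 (4 * n + 2)
            = (Finset.Icc 1 (2 * n + 1)).disjUnion (Finset.Icc (2 * n + 2) (4 * n + 2)) hdisj := by
          ext x
          simp only [Finset.mem_disjUnion, Finset.mem_Icc]
          omega
        rw [hun]
        rfl
      rw [← Finset.univ_disjSum_univ, ← Finset.univ_disjSum_univ, Finset.val_disjSum,
        Finset.val_disjSum, Multiset.disjSum, Multiset.disjSum]
      simp only [Multiset.map_add, Multiset.map_map, Function.comp_def, Sum.elim_inl,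
        Sum.elim_inr]
      have huval : (Finset.univ.val : Multiset Unit) = {()} := rfl
      rw [huval, hsplit, ← key, ← keysh]
      simp only [Multiset.map_singleton]
      abel
  · rw [Fintype.sum_sum_type, Fintype.sum_sum_type]
    have h1 : ∀ j : Fin n, (2 * n + 1 + a j) + (2 * n + 1 - a j) = 2 * (2 * n + 1) := by
      intro j; have := ha_le j; omega
    have : (∑ j : Fin n, (2 * n + 1 + a j)) + (∑ j : Fin n, (2 * n + 1 - a j))
        = n * (2 * (2 * n + 1)) := by
      rw [← Finset.sum_add_distrib]
      simp only [h1, Finset.sum_const, Finset.card_univ, Fintype.card_fin, smul_eq_mul]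
    simp only [Sum.elim_inl, Sum.elim_inr, Finset.sum_const, Finset.card_univ,
      Fintype.card_unit, one_smul]
    have e1 : n * (2 * (2 * n + 1)) = 4 * (n * n) + 2 * n := by ring
    have e2 : (2 * n + 1) ^ 2 = 4 * (n * n) + 4 * n + 1 := by ring
    omega
end

section
/- Let a < m < b be positive integers. The set A = {a, a+1, ..., b} \ {m} is a perfect extremal Skolem set if and only if b = 3a and m = (a + b)/2 = 2a. -/
lemma sum_Icc_gauss (a k : ℕ) : (∑ i ∈ Finset.Icc a (a + k), i) * 2 = (2 * a + k) * (k + 1) := by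
  induction k with
  | zero => simp; omega
  | succ k ih =>
    rw [show a + (k+1) = (a + k) + 1 from rfl, Finset.sum_Icc_succ_top (by omega)]
    nlinarith [ih]

lemma mseq (u v : Multiset ℕ) (hu : u.Nodup) (hc : Multiset.card v ≤ Multiset.card u)
    (hsub : ∀ x ∈ u, x ∈ v) : u = v :=
  Multiset.eq_of_le_of_card_le ((Multiset.le_iff_subset hu).mpr hsub) hc

/-- A set `A` of `n` distinct positive integers is a perfect extremal Skolem set if
`{1,...,2n}` (with `n = |A|`) can be partitioned into `n` pairs whose differences are
exactly the elements of `A`, and the elements of `A` sum to `n^2`. -/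
def IsPerfectExtremalSkolemSet (A : Finset ℕ) : Prop :=
  (∃ s t : Fin A.card → ℕ, (∀ i, t i < s i) ∧
      Multiset.map s Finset.univ.val + Multiset.map t Finset.univ.val
        = (Finset.Icc 1 (2 * A.card)).val ∧
      Multiset.map (fun i => s i - t i) Finset.univ.val = A.val) ∧
  ∑ x ∈ A, x = A.card ^ 2

/-- for positive integers `a < m < b`, the set `{a, a+1, ..., b} \ {m}` is a
perfect extremal Skolem set iff `b = 3a` and `m = (a+b)/2 = 2a`. -/
theorem extremal_near_langford (a m b : ℕ) (ha : 0 < a) (ham : a < m) (hmb : m < b) :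
    IsPerfectExtremalSkolemSet ((Finset.Icc a b).erase m) ↔ b = 3 * a ∧ m = 2 * a := by
  constructor
  · rintro ⟨-, hsum⟩
    obtain ⟨n, rfl⟩ : ∃ n, b = a + n := ⟨b - a, by omega⟩
    have hmem : m ∈ Finset.Icc a (a + n) := by simp [Finset.mem_Icc]; omega
    have hcard : ((Finset.Icc a (a + n)).erase m).card = n := by
      rw [Finset.card_erase_of_mem hmem, Nat.card_Icc]; omega
    have hs : ∑ x ∈ (Finset.Icc a (a + n)).erase m, x + m = ∑ x ∈ Finset.Icc a (a + n), x :=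
      Finset.sum_erase_add _ _ hmem
    have hg := sum_Icc_gauss a n
    rw [hcard] at hsum
    have key : n ^ 2 + 2 * m = 2 * a * n + 2 * a + n := by nlinarith [hs, hg, hsum]
    have h3 : n * n < n * (2 * a + 1) := by nlinarith [key]
    have hle : n < 2 * a + 1 := lt_of_mul_lt_mul_left h3 (Nat.zero_le n)
    have h4 : n * (2 * a) < n * (n + 1) := by nlinarith [key]
    have hge : 2 * a < n + 1 := lt_of_mul_lt_mul_left h4 (Nat.zero_le n)
    have hn : n = 2 * a := by omega
    subst hn
    exact ⟨by ring, by nlinarith [key]⟩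
  · rintro ⟨rfl, rfl⟩
    set A := (Finset.Icc a (3 * a)).erase (2 * a) with hA
    have hmem : 2 * a ∈ Finset.Icc a (3 * a) := by simp [Finset.mem_Icc]; omega
    have hcard : A.card = 2 * a := by
      rw [hA, Finset.card_erase_of_mem hmem, Nat.card_Icc]; omega
    have hbound : ∀ i : Fin A.card, (i : ℕ) < 2 * a := by
      intro i; have := i.isLt; omega
    set s : Fin A.card → ℕ := fun i => if (i : ℕ) < a then 4 * a - (i : ℕ) else a + (i : ℕ) + 1
      with hs
    set t : Fin A.card → ℕ :=
      fun i => if (i : ℕ) < a then 2 * a - 2 * (i : ℕ) - 1 else 2 * (i : ℕ) - 2 * a + 2 with ht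
    have hsval : ∀ i : Fin A.card, 2 * a + 1 ≤ s i ∧ s i ≤ 4 * a := by
      intro i; have := hbound i; rw [hs]; dsimp only; split <;> omega
    have htval : ∀ i : Fin A.card, 1 ≤ t i ∧ t i ≤ 2 * a := by
      intro i; have := hbound i; rw [ht]; dsimp only; split <;> omega
    have hts : ∀ i, t i < s i := by
      intro i; have h1 := hsval i; have h2 := htval i; omega
    have hsinj : Function.Injective s := by
      intro i j h
      have hi := hbound i; have hj := hbound j
      rw [hs] at h; dsimp only at h
      apply Fin.ext
      split_ifs at h <;> omega
    have htinj : Function.Injective t := by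
      intro i j h
      have hi := hbound i; have hj := hbound j
      rw [ht] at h; dsimp only at h
      apply Fin.ext
      split_ifs at h <;> omega
    have hd : ∀ i : Fin A.card,
        s i - t i = if (i : ℕ) < a then 2 * a + (i : ℕ) + 1 else 3 * a - (i : ℕ) - 1 := by
      intro i; have := hbound i; rw [hs, ht]; dsimp only; split <;> omega
    have hdinj : Function.Injective (fun i => s i - t i) := by
      intro i j h
      have hi := hbound i; have hj := hbound j
      dsimp only at h
      rw [hd i, hd j] at h
      apply Fin.ext
      split_ifs at h <;> omega
    refine ⟨⟨s, t, hts, ?_, ?_⟩, ?_⟩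
    · apply mseq
      · rw [Multiset.nodup_add]
        refine ⟨Multiset.Nodup.map hsinj Finset.univ.nodup,
                Multiset.Nodup.map htinj Finset.univ.nodup, ?_⟩
        rw [Multiset.disjoint_left]
        intro x hx hx'
        rw [Multiset.mem_map] at hx hx'
        obtain ⟨i, -, rfl⟩ := hx
        obtain ⟨j, -, hj⟩ := hx'
        have := hsval i; have := htval j; omega
      · simp [hcard, Nat.card_Icc]; omega
      · intro x hx
        rw [Multiset.mem_add] at hx
        rw [Finset.mem_val, Finset.mem_Icc]
        rcases hx with hx | hx <;> rw [Multiset.mem_map] at hx <;>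
          obtain ⟨i, -, rfl⟩ := hx
        · have := hsval i; omega
        · have := htval i; omega
    · apply mseq
      · exact Multiset.Nodup.map hdinj Finset.univ.nodup
      · simp [hcard]
      · intro x hx
        rw [Multiset.mem_map] at hx
        obtain ⟨i, -, rfl⟩ := hx
        rw [Finset.mem_val, hA, Finset.mem_erase, Finset.mem_Icc]
        have := hbound i
        rw [hd i]
        split <;> omega
    · have hsum : ∑ x ∈ A, x + 2 * a = ∑ x ∈ Finset.Icc a (3 * a), x :=
        Finset.sum_erase_add _ _ hmem
      have hg := sum_Icc_gauss a (2 * a)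
      rw [show a + 2 * a = 3 * a by ring] at hg
      rw [hcard]
      nlinarith [hsum, hg]
end

section
/- For all positive integers a ≥ 1, the set {a, a+1, ..., 3a} \ {2a} is a perfect extremal Skolem set: explicitly, the pairs (2a - 2j, 3a - j) for j = 0, ..., a-1 and (4a + 1 - 2j, 5a + 1 - j) for j = a+1, ..., 2a partition {1, 2, ..., 4a} and realize each difference a + j for j ∈ [0, a-1] ∪ [a+1, 2a] exactly once. -/
lemma eq_of_nodup_subset_card {α : Type*} [DecidableEq α] {s t : Multiset α}
    (h1 : s.Nodup) (h2 : ∀ x ∈ s, x ∈ t) (h3 : Multiset.card t ≤ Multiset.card s) :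
    s = t :=
  Multiset.eq_of_le_of_card_le ((Multiset.le_iff_subset h1).2 h2) h3

/-- for all `a ≥ 1`, the set `{a, a+1, ..., 3a} \ {2a}` is a perfect extremal
Skolem set; explicitly, the pairs `(2a - 2j, 3a - j)` for `j = 0, ..., a-1` together with
`(4a + 1 - 2j, 5a + 1 - j)` for `j = a+1, ..., 2a` partition `{1,...,4a}` and their
differences realize each element of `{a,...,3a} \ {2a}` (i.e. each `a + j` for
`j ∈ [0, a-1] ∪ [a+1, 2a]`) exactly once. -/
theorem extremal_near_langford_construction (a : ℕ) (ha : 1 ≤ a) :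
    IsPerfectExtremalSkolemSet ((Finset.Icc a (3 * a)).erase (2 * a)) ∧
    (∀ p ∈ (Finset.range a).val.map (fun j => (3 * a - j, 2 * a - 2 * j))
        + (Finset.Icc (a + 1) (2 * a)).val.map
            (fun j => (5 * a + 1 - j, 4 * a + 1 - 2 * j)),
      p.2 < p.1) ∧
    Multiset.map Prod.fst
        ((Finset.range a).val.map (fun j => (3 * a - j, 2 * a - 2 * j))
          + (Finset.Icc (a + 1) (2 * a)).val.map
              (fun j => (5 * a + 1 - j, 4 * a + 1 - 2 * j)))
      + Multiset.map Prod.snd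
        ((Finset.range a).val.map (fun j => (3 * a - j, 2 * a - 2 * j))
          + (Finset.Icc (a + 1) (2 * a)).val.map
              (fun j => (5 * a + 1 - j, 4 * a + 1 - 2 * j)))
      = (Finset.Icc 1 (4 * a)).val ∧
    Multiset.map (fun p : ℕ × ℕ => p.1 - p.2)
        ((Finset.range a).val.map (fun j => (3 * a - j, 2 * a - 2 * j))
          + (Finset.Icc (a + 1) (2 * a)).val.map
              (fun j => (5 * a + 1 - j, 4 * a + 1 - 2 * j)))
      = ((Finset.Icc a (3 * a)).erase (2 * a)).val := by
  set A : Finset ℕ := (Finset.Icc a (3 * a)).erase (2 * a) with hAdef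
  set P : Multiset (ℕ × ℕ) :=
      (Finset.range a).val.map (fun j => (3 * a - j, 2 * a - 2 * j))
        + (Finset.Icc (a + 1) (2 * a)).val.map
            (fun j => (5 * a + 1 - j, 4 * a + 1 - 2 * j)) with hPdef
  -- membership characterization of P
  have hmemP : ∀ p : ℕ × ℕ, p ∈ P ↔
      (∃ j, j < a ∧ (3 * a - j, 2 * a - 2 * j) = p) ∨
      (∃ j, (a + 1 ≤ j ∧ j ≤ 2 * a) ∧ (5 * a + 1 - j, 4 * a + 1 - 2 * j) = p) := by
    intro p
    simp [hPdef, Multiset.mem_map, Finset.mem_val, Finset.mem_range, Finset.mem_Icc]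
  -- cardinalities
  have hAcard : A.card = 2 * a := by
    rw [hAdef, Finset.card_erase_of_mem (by simp [Finset.mem_Icc]; omega), Nat.card_Icc]
    omega
  have hPcard : Multiset.card P = 2 * a := by
    simp [hPdef, Nat.card_Icc]
    omega
  have hmemA : ∀ x : ℕ, x ∈ A.val ↔ (x ≠ 2 * a ∧ a ≤ x ∧ x ≤ 3 * a) := by
    intro x
    rw [Finset.mem_val, hAdef, Finset.mem_erase, Finset.mem_Icc]
  -- the second conjunct : pairs are decreasing
  have hlt : ∀ p ∈ P, p.2 < p.1 := by
    intro p hp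
    rcases (hmemP p).1 hp with ⟨j, hj, rfl⟩ | ⟨j, hj, rfl⟩ <;> simp <;> omega
  -- third conjunct : fst + snd = Icc 1 (4a)
  have E1 : Multiset.map Prod.fst P + Multiset.map Prod.snd P
      = (Finset.Icc 1 (4 * a)).val := by
    apply eq_of_nodup_subset_card
    · rw [Multiset.nodup_add]
      refine ⟨?_, ?_, ?_⟩
      · rw [hPdef, Multiset.map_add, Multiset.map_map, Multiset.map_map,
          Multiset.nodup_add]
        refine ⟨Multiset.Nodup.map_on ?_ (Finset.range a).nodup,
          Multiset.Nodup.map_on ?_ (Finset.Icc (a+1) (2*a)).nodup,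
          Multiset.disjoint_left.2 ?_⟩
        · intro x hx y hy h
          simp only [Finset.mem_val, Finset.mem_range] at hx hy
          simp only [Function.comp] at h
          omega
        · intro x hx y hy h
          simp only [Finset.mem_val, Finset.mem_Icc] at hx hy
          simp only [Function.comp] at h
          omega
        · intro x hx hx'
          simp only [Multiset.mem_map, Finset.mem_val, Finset.mem_range,
            Finset.mem_Icc, Function.comp] at hx hx'
          obtain ⟨j, hj, rfl⟩ := hx
          obtain ⟨k, hk, hke⟩ := hx'
          omega
      · rw [hPdef, Multiset.map_add, Multiset.map_map, Multiset.map_map,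
          Multiset.nodup_add]
        refine ⟨Multiset.Nodup.map_on ?_ (Finset.range a).nodup,
          Multiset.Nodup.map_on ?_ (Finset.Icc (a+1) (2*a)).nodup,
          Multiset.disjoint_left.2 ?_⟩
        · intro x hx y hy h
          simp only [Finset.mem_val, Finset.mem_range] at hx hy
          simp only [Function.comp] at h
          omega
        · intro x hx y hy h
          simp only [Finset.mem_val, Finset.mem_Icc] at hx hy
          simp only [Function.comp] at h
          omega
        · intro x hx hx'
          simp only [Multiset.mem_map, Finset.mem_val, Finset.mem_range,
            Finset.mem_Icc, Function.comp] at hx hx'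
          obtain ⟨j, hj, rfl⟩ := hx
          obtain ⟨k, hk, hke⟩ := hx'
          omega
      · refine Multiset.disjoint_left.2 ?_
        intro x hx hx'
        simp only [hPdef, Multiset.map_add, Multiset.map_map, Multiset.mem_add,
          Multiset.mem_map, Finset.mem_val, Finset.mem_range, Finset.mem_Icc,
          Function.comp] at hx hx'
        rcases hx with ⟨j, hj, rfl⟩ | ⟨j, hj, rfl⟩ <;>
          rcases hx' with ⟨k, hk, hke⟩ | ⟨k, hk, hke⟩ <;> omega
    · intro x hx
      simp only [Multiset.mem_add, Multiset.mem_map] at hx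
      rw [Finset.mem_val, Finset.mem_Icc]
      rcases hx with ⟨p, hp, rfl⟩ | ⟨p, hp, rfl⟩ <;>
        rcases (hmemP p).1 hp with ⟨j, hj, rfl⟩ | ⟨j, hj, rfl⟩ <;> simp <;> omega
    · simp only [Multiset.card_add, Multiset.card_map, Finset.card_val,
        Nat.card_Icc, hPcard]
      omega
  -- fourth conjunct : differences
  have E2 : Multiset.map (fun p : ℕ × ℕ => p.1 - p.2) P = A.val := by
    apply eq_of_nodup_subset_card
    · rw [hPdef, Multiset.map_add, Multiset.map_map, Multiset.map_map,
        Multiset.nodup_add]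
      refine ⟨Multiset.Nodup.map_on ?_ (Finset.range a).nodup,
        Multiset.Nodup.map_on ?_ (Finset.Icc (a+1) (2*a)).nodup,
        Multiset.disjoint_left.2 ?_⟩
      · intro x hx y hy h
        simp only [Finset.mem_val, Finset.mem_range] at hx hy
        simp only [Function.comp] at h
        omega
      · intro x hx y hy h
        simp only [Finset.mem_val, Finset.mem_Icc] at hx hy
        simp only [Function.comp] at h
        omega
      · intro x hx hx'
        simp only [Multiset.mem_map, Finset.mem_val, Finset.mem_range,
          Finset.mem_Icc, Function.comp] at hx hx'
        obtain ⟨j, hj, rfl⟩ := hx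
        obtain ⟨k, hk, hke⟩ := hx'
        omega
    · intro x hx
      simp only [Multiset.mem_map] at hx
      obtain ⟨p, hp, rfl⟩ := hx
      rw [hmemA]
      rcases (hmemP p).1 hp with ⟨j, hj, rfl⟩ | ⟨j, hj, rfl⟩ <;> dsimp only <;> omega
    · simp only [Multiset.card_map, Finset.card_val, hAcard, hPcard]
      omega
  -- construct the pairing functions
  refine ⟨⟨⟨fun i => if i.val < a then 3 * a - i.val else 5 * a - i.val,
      fun i => if i.val < a then 2 * a - 2 * i.val else 4 * a - 1 - 2 * i.val,
      ?_, ?_, ?_⟩, ?_⟩, hlt, E1, E2⟩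
  · intro i
    have hi := i.isLt
    dsimp only
    split_ifs <;> omega
  · -- sums equal Icc 1 (2 * A.card)
    have hpair : Multiset.map
        (fun i : Fin A.card => ((if i.val < a then 3 * a - i.val else 5 * a - i.val : ℕ),
          (if i.val < a then 2 * a - 2 * i.val else 4 * a - 1 - 2 * i.val : ℕ)))
        Finset.univ.val = P := by
      apply eq_of_nodup_subset_card
      · apply Multiset.Nodup.map_on _ Finset.univ.nodup
        intro i _ j _ h
        have hi := i.isLt; have hj := j.isLt
        rw [Prod.mk.injEq] at h
        apply Fin.ext
        split_ifs at h <;> omega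
      · intro x hx
        simp only [Multiset.mem_map, Finset.mem_val, Finset.mem_univ, true_and] at hx
        obtain ⟨i, rfl⟩ := hx
        have hi := i.isLt
        rw [hmemP]
        by_cases h : i.val < a
        · left; exact ⟨i.val, h, by simp [h]⟩
        · right
          refine ⟨i.val + 1, by omega, ?_⟩
          simp only [h, if_false, Prod.mk.injEq]
          constructor <;> omega
      · simp [hPcard, hAcard]
    have h2A : 2 * A.card = 4 * a := by omega
    rw [h2A, ← E1, ← hpair, Multiset.map_map, Multiset.map_map]
    rfl
  · -- differences equal A.val
    rw [← E2]
    apply eq_of_nodup_subset_card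
    · apply Multiset.Nodup.map_on _ Finset.univ.nodup
      intro i _ j _ h
      have hi := i.isLt; have hj := j.isLt
      dsimp only at h
      apply Fin.ext
      split_ifs at h <;> omega
    · intro x hx
      simp only [Multiset.mem_map, Finset.mem_val, Finset.mem_univ, true_and] at hx
      obtain ⟨i, rfl⟩ := hx
      have hi := i.isLt
      simp only [Multiset.mem_map]
      by_cases h : i.val < a
      · exact ⟨(3 * a - i.val, 2 * a - 2 * i.val),
          (hmemP _).2 (Or.inl ⟨i.val, h, rfl⟩), by simp [h]⟩
      · refine ⟨(5 * a + 1 - (i.val + 1), 4 * a + 1 - 2 * (i.val + 1)),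
          (hmemP _).2 (Or.inr ⟨i.val + 1, by omega, rfl⟩), ?_⟩
        simp only [h, if_false]
        omega
    · simp [hPcard, hAcard]
  · -- the sum condition
    have hmem2a : (2 * a) ∈ Finset.Icc a (3 * a) := by simp [Finset.mem_Icc]; omega
    have hsum : 2 * a + ∑ x ∈ A, x = ∑ x ∈ Finset.Icc a (3 * a), x := by
      rw [hAdef]
      exact Finset.add_sum_erase _ (fun x => x) hmem2a
    have hIcc : Finset.Icc a (3 * a) = Finset.Ico a (3 * a + 1) := by
      rw [Finset.Ico_add_one_right_eq_Icc]
    have h3 : ∑ x ∈ Finset.Icc a (3 * a), x = ∑ i ∈ Finset.range (2 * a + 1), (a + i) := by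
      rw [hIcc, Finset.sum_Ico_eq_sum_range]
      have : 3 * a + 1 - a = 2 * a + 1 := by omega
      rw [this]
    have h4 : (∑ i ∈ Finset.range (2 * a + 1), i) * 2 = (2 * a + 1) * (2 * a) := by
      rw [Finset.sum_range_id_mul_two]
      simp
    rw [Finset.sum_add_distrib, Finset.sum_const, Finset.card_range, smul_eq_mul] at h3
    rw [hAcard]
    have e1 : (2 * a + 1) * (2 * a) = 2 * ((2 * a + 1) * a) := by ring
    have e2 : (2 * a) ^ 2 + 2 * a = 2 * ((2 * a + 1) * a) := by ring
    omega
end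

section
/- If A = {a_1 ≥ a_2 ≥ ... ≥ a_n} is a perfect extremal multi Skolem set (so Σ a_i = n^2 and adding 1 to any element would violate the density condition), and α = (a_1 - n, ..., a_n - n), then there is a bijection between extremal partitions of {1, ..., 2n} realizing A and permutations of S_n with displacement pattern α; consequently the total number of perfect extremal multi Skolem-type sequences of order n, summed over all multisets A, is n!. -/
open Finset

namespace Skolem18

def pemb (n : ℕ) (σ : Equiv.Perm (Fin n)) : Fin n ↪ ℕ × ℕ :=
  ⟨fun i => ((σ i : ℕ) + n + 1, (i : ℕ) + 1), show Function.Injective _ from fun i j h => by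
    have h2 := congrArg Prod.snd h
    simp only at h2
    exact Fin.ext (by omega)⟩

def MSet (n : ℕ) (σ : Equiv.Perm (Fin n)) : Finset (ℕ × ℕ) :=
  Finset.map (pemb n σ) Finset.univ

lemma aux_map (n c : ℕ) :
    Multiset.map (fun i : Fin n => (i : ℕ) + c + 1) Finset.univ.val
      = (Finset.Icc (c+1) (c+n)).val := by
  have h : Finset.map ⟨fun i : Fin n => (i : ℕ) + c + 1, show Function.Injective _ from fun i j h => by exact Fin.ext (by omega)⟩
      Finset.univ = Finset.Icc (c+1) (c+n) := by
    ext x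
    simp only [Finset.mem_map, Finset.mem_univ, true_and, Function.Embedding.coeFn_mk,
      Finset.mem_Icc]
    constructor
    · rintro ⟨i, rfl⟩; omega
    · intro hx; exact ⟨⟨x - c - 1, by omega⟩, by simp; omega⟩
  simpa using congrArg Finset.val h

lemma map_univ_perm (n : ℕ) (σ : Equiv.Perm (Fin n)) :
    Multiset.map (fun i => σ i) (Finset.univ : Finset (Fin n)).val = Finset.univ.val := by
  simpa using congrArg Finset.val (Finset.map_univ_equiv σ)

lemma MSet_fst (n : ℕ) (σ : Equiv.Perm (Fin n)) :
    (MSet n σ).val.map Prod.fst = (Finset.Icc (n+1) (2*n)).val := by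
  rw [MSet, Finset.map_val, Multiset.map_map]
  have : (Prod.fst ∘ pemb n σ) = (fun j : Fin n => (j : ℕ) + n + 1) ∘ (fun i => σ i) := rfl
  rw [this, ← Multiset.map_map, map_univ_perm, aux_map, two_mul]

lemma MSet_snd (n : ℕ) (σ : Equiv.Perm (Fin n)) :
    (MSet n σ).val.map Prod.snd = (Finset.Icc 1 n).val := by
  rw [MSet, Finset.map_val, Multiset.map_map]
  have h0 := aux_map n 0
  simp only [add_zero, zero_add] at h0
  have h1 : (Prod.snd ∘ pemb n σ) = (fun j : Fin n => (j : ℕ) + 1) := rfl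
  rw [h1, h0]

lemma Icc_split (n : ℕ) :
    (Finset.Icc (n+1) (2*n)).val + (Finset.Icc 1 n).val = (Finset.Icc 1 (2*n)).val := by
  have hd : Disjoint (Finset.Icc (n+1) (2*n)) (Finset.Icc 1 n) := by
    simp [Finset.disjoint_left, Finset.mem_Icc]; omega
  have hu : Finset.Icc 1 (2*n) = (Finset.Icc (n+1) (2*n)).disjUnion (Finset.Icc 1 n) hd := by
    ext x; simp [Finset.mem_Icc]; omega
  rw [hu]; rfl

lemma MSet_coords (n : ℕ) (σ : Equiv.Perm (Fin n)) :
    (MSet n σ).val.map Prod.fst + (MSet n σ).val.map Prod.snd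
      = (Finset.Icc 1 (2*n)).val := by
  rw [MSet_fst, MSet_snd, Icc_split]

lemma MSet_lt (n : ℕ) (σ : Equiv.Perm (Fin n)) : ∀ p ∈ MSet n σ, p.2 < p.1 := by
  intro p hp
  simp only [MSet, Finset.mem_map] at hp
  obtain ⟨i, _, rfl⟩ := hp
  simp only [pemb, Function.Embedding.coeFn_mk]
  have := i.isLt
  omega

lemma MSet_subset (n : ℕ) (σ : Equiv.Perm (Fin n)) :
    MSet n σ ⊆ Finset.Icc 1 (2*n) ×ˢ Finset.Icc 1 (2*n) := by
  intro p hp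
  simp only [MSet, Finset.mem_map] at hp
  obtain ⟨i, _, rfl⟩ := hp
  simp only [pemb, Function.Embedding.coeFn_mk, Finset.mem_product, Finset.mem_Icc]
  have := i.isLt
  have := (σ i).isLt
  omega

lemma MSet_diffs (n : ℕ) (σ : Equiv.Perm (Fin n)) :
    (MSet n σ).val.map (fun p => p.1 - p.2)
      = Multiset.map (fun i : Fin n => (σ i : ℕ) + n - (i : ℕ)) Finset.univ.val := by
  rw [MSet, Finset.map_val, Multiset.map_map]
  apply Multiset.map_congr rfl
  intro i _
  simp only [Function.comp_apply, pemb, Function.Embedding.coeFn_mk]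
  omega

lemma MSet_sum (n : ℕ) (σ : Equiv.Perm (Fin n)) :
    ∑ p ∈ MSet n σ, (p.1 - p.2) = n ^ 2 := by
  rw [MSet, Finset.sum_map]
  have h1 : ∀ i : Fin n, (pemb n σ i).1 - (pemb n σ i).2 = (σ i : ℕ) + (n - (i:ℕ)) := by
    intro i
    simp only [pemb, Function.Embedding.coeFn_mk]
    have := i.isLt
    omega
  rw [Finset.sum_congr rfl (fun i _ => h1 i), Finset.sum_add_distrib]
  have h2 : ∑ i : Fin n, ((σ i : ℕ)) = ∑ i : Fin n, (i : ℕ) := Equiv.sum_comp σ (fun i => (i : ℕ))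
  rw [h2, ← Finset.sum_add_distrib]
  have h3 : ∀ i : Fin n, (i : ℕ) + (n - (i:ℕ)) = n := fun i => by have := i.isLt; omega
  rw [Finset.sum_congr rfl (fun i _ => h3 i), Finset.sum_const]
  simp [pow_two]

lemma MSet_inj (n : ℕ) {σ τ : Equiv.Perm (Fin n)} (h : MSet n σ = MSet n τ) : σ = τ := by
  apply Equiv.ext
  intro i
  have hm : ((σ i : ℕ) + n + 1, (i : ℕ) + 1) ∈ MSet n τ := by
    rw [← h]
    simp only [MSet, Finset.mem_map]
    exact ⟨i, Finset.mem_univ i, rfl⟩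
  simp only [MSet, Finset.mem_map, pemb, Function.Embedding.coeFn_mk] at hm
  obtain ⟨j, _, hj⟩ := hm
  have h1 : (τ j : ℕ) + n + 1 = (σ i : ℕ) + n + 1 := congrArg Prod.fst hj
  have h2 : (j : ℕ) + 1 = (i : ℕ) + 1 := congrArg Prod.snd hj
  have : j = i := Fin.ext (by omega)
  subst this
  exact Fin.ext (by omega)


lemma sum_w (n : ℕ) :
    ∑ x ∈ Finset.Icc 1 (2*n), (2*(x:ℤ) - (2*(n:ℤ)+1)).natAbs = 2*n^2 := by
  have hd : Disjoint (Finset.Icc 1 n) (Finset.Icc (n+1) (2*n)) := by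
    simp [Finset.disjoint_left, Finset.mem_Icc]; omega
  have hu : Finset.Icc 1 (2*n) = (Finset.Icc 1 n).disjUnion (Finset.Icc (n+1) (2*n)) hd := by
    ext x; simp [Finset.mem_Icc]; omega
  rw [hu, Finset.sum_disjUnion]
  have hm : Finset.Icc (n+1) (2*n) = Finset.map (addLeftEmbedding n) (Finset.Icc 1 n) := by
    rw [Finset.map_add_left_Icc, two_mul]
  rw [hm, Finset.sum_map, ← Finset.sum_add_distrib]
  have hpt : ∀ x ∈ Finset.Icc 1 n,
      ((2*(x:ℤ) - (2*(n:ℤ)+1)).natAbs + (2*((addLeftEmbedding n x : ℕ):ℤ) - (2*(n:ℤ)+1)).natAbs)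
        = 2*n := by
    intro x hx
    simp only [Finset.mem_Icc] at hx
    simp only [addLeftEmbedding_apply]
    push_cast
    omega
  rw [Finset.sum_congr rfl hpt, Finset.sum_const, Nat.card_Icc]
  simp [pow_two]
  ring

lemma char (n : ℕ) (M : Finset (ℕ × ℕ))
    (h0 : M ⊆ Finset.Icc 1 (2*n) ×ˢ Finset.Icc 1 (2*n))
    (h1 : M.val.map Prod.fst + M.val.map Prod.snd = (Finset.Icc 1 (2*n)).val)
    (h2 : ∀ p ∈ M, p.2 < p.1)
    (h3 : ∑ p ∈ M, (p.1 - p.2) = n ^ 2) :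
    ∃ σ : Equiv.Perm (Fin n), M = MSet n σ := by
  classical
  set w : ℕ → ℕ := fun x => (2*(x:ℤ) - (2*(n:ℤ)+1)).natAbs with hw
  have hb : ∀ p ∈ M, 1 ≤ p.2 ∧ p.2 < p.1 ∧ p.1 ≤ 2*n := by
    intro p hp
    have hm := h0 hp
    simp only [Finset.mem_product, Finset.mem_Icc] at hm
    exact ⟨hm.2.1, h2 p hp, hm.1.2⟩
  have hcard : M.card = n := by
    have hc := congrArg Multiset.card h1
    simp only [Multiset.card_add, Multiset.card_map, ← Finset.card_def, Nat.card_Icc] at hc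
    omega
  have hnd : ((Finset.Icc 1 (2*n)).val).Nodup := (Finset.Icc 1 (2*n)).nodup
  have hndf : (M.val.map Prod.fst).Nodup :=
    Multiset.nodup_of_le (h1 ▸ Multiset.le_add_right _ _) hnd
  have hnds : (M.val.map Prod.snd).Nodup :=
    Multiset.nodup_of_le (h1 ▸ Multiset.le_add_left _ _) hnd
  -- weighted sum over M
  have hWM : ∑ p ∈ M, (w p.1 + w p.2) = 2*n^2 := by
    have e1 : ∑ p ∈ M, (w p.1 + w p.2)
        = ((M.val.map Prod.fst + M.val.map Prod.snd).map w).sum := by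
      rw [Multiset.map_add, Multiset.sum_add, Multiset.map_map, Multiset.map_map]
      rw [Finset.sum_add_distrib]
      rfl
    rw [e1, h1]
    exact sum_w n
  have hle : ∀ p ∈ M, 2*(p.1 - p.2) ≤ w p.1 + w p.2 := by
    intro p hp
    have := hb p hp
    simp only [hw]
    omega
  have hsum2 : ∑ p ∈ M, 2*(p.1 - p.2) = ∑ p ∈ M, (w p.1 + w p.2) := by
    rw [← Finset.mul_sum, h3, hWM]
  have heq : ∀ p ∈ M, 2*(p.1 - p.2) = w p.1 + w p.2 := by
    intro p hp
    exact ((Finset.sum_eq_sum_iff_of_le hle).mp hsum2 p hp)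
  have hkey : ∀ p ∈ M, p.2 ≤ n ∧ n+1 ≤ p.1 := by
    intro p hp
    have h := heq p hp
    have hbp := hb p hp
    simp only [hw] at h
    omega
  -- unique pair with given second coordinate
  have hexu : ∀ i : Fin n, ∃! p, p ∈ M ∧ p.2 = (i:ℕ)+1 := by
    intro i
    have hi := i.isLt
    have hmem : ((i:ℕ)+1) ∈ (Finset.Icc 1 (2*n)).val := by
      rw [Finset.mem_val, Finset.mem_Icc]
      omega
    rw [← h1, Multiset.mem_add] at hmem
    have hnf : ((i:ℕ)+1) ∉ M.val.map Prod.fst := by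
      intro hc
      obtain ⟨p, hp, hpe⟩ := Multiset.mem_map.mp hc
      have := (hkey p (Finset.mem_def.mpr hp)).2
      omega
    obtain ⟨p, hp, hpe⟩ := Multiset.mem_map.mp (hmem.resolve_left hnf)
    refine ⟨p, ⟨Finset.mem_def.mpr hp, hpe⟩, ?_⟩
    rintro q ⟨hq, hqe⟩
    exact Multiset.inj_on_of_nodup_map hnds q (Finset.mem_def.mp hq) p hp (by rw [hqe, hpe])
  choose f hf using fun i => (hexu i).exists
  have huniq : ∀ i : Fin n, ∀ q, q ∈ M → q.2 = (i:ℕ)+1 → q = f i :=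
    fun i q hq hqe => (hexu i).unique ⟨hq, hqe⟩ (hf i)
  have hlt : ∀ i : Fin n, (f i).1 - (n+1) < n := by
    intro i
    have hk := (hkey _ (hf i).1).2
    have hbb := hb _ (hf i).1
    omega
  set g : Fin n → Fin n := fun i => ⟨(f i).1 - (n+1), hlt i⟩ with hg
  have hginj : Function.Injective g := by
    intro i j hij
    have hval : (f i).1 - (n+1) = (f j).1 - (n+1) := congrArg Fin.val hij
    have hki := (hkey _ (hf i).1).2
    have hkj := (hkey _ (hf j).1).2
    have hfe : (f i).1 = (f j).1 := by omega
    have : f i = f j :=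
      Multiset.inj_on_of_nodup_map hndf _ (Finset.mem_def.mp (hf i).1) _
        (Finset.mem_def.mp (hf j).1) hfe
    have hsnd := congrArg Prod.snd this
    rw [(hf i).2, (hf j).2] at hsnd
    exact Fin.ext (by omega)
  refine ⟨Equiv.ofBijective g (Finite.injective_iff_bijective.mp hginj), ?_⟩
  have hsub : MSet n (Equiv.ofBijective g (Finite.injective_iff_bijective.mp hginj)) ⊆ M := by
    intro p hp
    simp only [MSet, Finset.mem_map, pemb, Function.Embedding.coeFn_mk] at hp
    obtain ⟨i, _, hip⟩ := hp
    have hgv : ((Equiv.ofBijective g (Finite.injective_iff_bijective.mp hginj)) i : ℕ)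
        = (f i).1 - (n+1) := rfl
    have hki := (hkey _ (hf i).1).2
    have hp1 : p = f i := by
      rw [← hip, (hf i).2.symm]
      have : (f i).1 - (n+1) + n + 1 = (f i).1 := by omega
      rw [hgv, this]
    rw [hp1]
    exact (hf i).1
  have hc2 : M.card ≤ (MSet n (Equiv.ofBijective g (Finite.injective_iff_bijective.mp hginj))).card := by
    rw [hcard, MSet, Finset.card_map, Finset.card_univ, Fintype.card_fin]
  exact (Finset.eq_of_subset_of_card_le hsub hc2).symm

lemma disp_iff (n : ℕ) (a : Fin n → ℕ) (σ : Equiv.Perm (Fin n)) :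
    (Multiset.map (fun i : Fin n => ((σ i).val : ℤ) - (i.val : ℤ)) Finset.univ.val
        = Multiset.map (fun i => (a i : ℤ) - n) Finset.univ.val)
    ↔ Multiset.map (fun i : Fin n => (σ i : ℕ) + n - (i : ℕ)) Finset.univ.val
        = Multiset.map a Finset.univ.val := by
  have hptL : ∀ i : Fin n,
      (fun x : ℕ => (x:ℤ) - n) ((σ i : ℕ) + n - (i : ℕ)) = ((σ i).val : ℤ) - (i.val : ℤ) := by
    intro i
    have := i.isLt
    simp only
    omega
  have hptR : ∀ i : Fin n, (fun x : ℕ => (x:ℤ) - n) (a i) = (a i : ℤ) - n := fun i => rfl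
  have hinj : Function.Injective (fun x : ℕ => (x:ℤ) - n) := by
    intro x y h
    simp only at h
    omega
  have eL : Multiset.map ((fun x : ℕ => (x:ℤ) - n) ∘ fun i : Fin n => (σ i : ℕ) + n - (i : ℕ))
      Finset.univ.val
      = Multiset.map (fun i : Fin n => ((σ i).val : ℤ) - (i.val : ℤ)) Finset.univ.val :=
    Multiset.map_congr rfl (fun i _ => hptL i)
  have eR : Multiset.map ((fun x : ℕ => (x:ℤ) - n) ∘ a) Finset.univ.val
      = Multiset.map (fun i => (a i : ℤ) - n) Finset.univ.val :=
    Multiset.map_congr rfl (fun i _ => hptR i)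
  constructor
  · intro h
    apply Multiset.map_injective hinj
    rw [Multiset.map_map, Multiset.map_map, eL, eR]
    exact h
  · intro h
    have h2 := congrArg (Multiset.map (fun x : ℕ => (x:ℤ) - n)) h
    rw [Multiset.map_map, Multiset.map_map, eL, eR] at h2
    exact h2

end Skolem18

/-- let `A = {a 0 ≥ a 1 ≥ ... ≥ a (n-1)}` be a perfect extremal multi Skolem
set (`∑ a i = n^2`) and `α i = a i - n` the associated displacement pattern. Then the
number of extremal partitions of `{1,...,2n}` realizing `A` equals the number of
permutations of `S_n` with displacement pattern `α` (they are in bijection); consequently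
the total number of perfect extremal multi Skolem-type sequences of order `n`, summed over
all multisets `A`, is `n!`. -/
theorem extremal_partitions_vs_displacements (n : ℕ) (a : Fin n → ℕ)
    (hpos : ∀ i, 0 < a i) (ha : Antitone a) (hsum : ∑ i, a i = n ^ 2) :
    ((Finset.Icc 1 (2 * n) ×ˢ Finset.Icc 1 (2 * n)).powerset.filter
        (fun M : Finset (ℕ × ℕ) =>
          M.val.map Prod.fst + M.val.map Prod.snd = (Finset.Icc 1 (2 * n)).val ∧
          (∀ p ∈ M, p.2 < p.1) ∧
          M.val.map (fun p => p.1 - p.2) = Multiset.map a Finset.univ.val)).card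
      = (Finset.univ.filter (fun π : Equiv.Perm (Fin n) =>
          Multiset.map (fun i : Fin n => ((π i).val : ℤ) - (i.val : ℤ)) Finset.univ.val
            = Multiset.map (fun i => (a i : ℤ) - n) Finset.univ.val)).card ∧
    ((Finset.Icc 1 (2 * n) ×ˢ Finset.Icc 1 (2 * n)).powerset.filter
        (fun M : Finset (ℕ × ℕ) =>
          M.val.map Prod.fst + M.val.map Prod.snd = (Finset.Icc 1 (2 * n)).val ∧
          (∀ p ∈ M, p.2 < p.1) ∧
          (∑ p ∈ M, (p.1 - p.2)) = n ^ 2)).card = n.factorial := by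
    classical
  constructor
  · symm
    apply Finset.card_bij (fun σ _ => Skolem18.MSet n σ)
    · intro σ hσ
      simp only [Finset.mem_filter, Finset.mem_univ, true_and] at hσ
      rw [Finset.mem_filter, Finset.mem_powerset]
      refine ⟨Skolem18.MSet_subset n σ, Skolem18.MSet_coords n σ, Skolem18.MSet_lt n σ, ?_⟩
      rw [Skolem18.MSet_diffs n σ]
      exact (Skolem18.disp_iff n a σ).mp hσ
    · intro σ _ τ _ h
      exact Skolem18.MSet_inj n h
    · intro M hM
      rw [Finset.mem_filter, Finset.mem_powerset] at hM
      obtain ⟨h0, h1, h2, h4⟩ := hM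
      have h3 : ∑ p ∈ M, (p.1 - p.2) = n ^ 2 := by
        have e : ∑ p ∈ M, (p.1 - p.2) = (M.val.map (fun p => p.1 - p.2)).sum := rfl
        have e2 : (Multiset.map a Finset.univ.val).sum = ∑ i, a i := rfl
        rw [e, h4, e2]
        exact hsum
      obtain ⟨σ, rfl⟩ := Skolem18.char n M h0 h1 h2 h3
      refine ⟨σ, ?_, rfl⟩
      rw [Finset.mem_filter]
      refine ⟨Finset.mem_univ σ, ?_⟩
      rw [Skolem18.MSet_diffs n σ] at h4
      exact (Skolem18.disp_iff n a σ).mpr h4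
  · have huniv : (Finset.univ : Finset (Equiv.Perm (Fin n))).card = n.factorial := by
      simp [Finset.card_univ, Fintype.card_perm]
    rw [← huniv]
    symm
    apply Finset.card_bij (fun σ _ => Skolem18.MSet n σ)
    · intro σ _
      rw [Finset.mem_filter, Finset.mem_powerset]
      exact ⟨Skolem18.MSet_subset n σ, Skolem18.MSet_coords n σ, Skolem18.MSet_lt n σ,
        Skolem18.MSet_sum n σ⟩
    · intro σ _ τ _ h
      exact Skolem18.MSet_inj n h
    · intro M hM
      rw [Finset.mem_filter, Finset.mem_powerset] at hM
      obtain ⟨h0, h1, h2, h3⟩ := hM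
      obtain ⟨σ, rfl⟩ := Skolem18.char n M h0 h1 h2 h3
      exact ⟨σ, Finset.mem_univ σ, rfl⟩
end
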